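/- arXiv:1804.06348 — 8 statements merged into one kernel-verified Lean document; each statement's English description precedes it below -/
import Mathlib

section
/- Let $M$ be a normalized non-degenerate Orlicz function and $K>1$ with $\lim_{t\to 0^+} M(Kt)/M(t)=\infty$, and let $\omega(t)=\sup\{M(\tau)/M(K\tau): 0<\tau\le t\}$. Let $x:\Gamma\to\mathbb{R}$ satisfy $\sum_\gamma M(|x(\gamma)|)=1$ and $\sum_\gamma M(K|x(\gamma)|) < \infty$. Then for every $A\subseteq\Gamma$: $1 \le \|P_A x\| + \omega(\|R_A x\|_\infty)\cdot \sum_{\gamma\in\Gamma} M(K|x(\gamma)|)$, where $\|R_A x\|_\infty = \sup_{\gamma\notin A}|x(\gamma)|$ and $\|\cdot\|$ is the Luxemburg norm. -/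
open Filter Topology

noncomputable def luxNorm {Γ : Type*} (M : ℝ → ℝ) (y : Γ → ℝ) : ℝ :=
  sInf {ρ : ℝ | 0 < ρ ∧ ∑' γ, ENNReal.ofReal (M (|y γ| / ρ)) ≤ 1}

theorem stmt6 {Γ : Type*} (M : ℝ → ℝ) (hconv : ConvexOn ℝ (Set.Ici 0) M)
    (hcont : ContinuousOn M (Set.Ici 0)) (h0 : M 0 = 0)
    (hpos : ∀ t, 0 < t → 0 < M t) (h1 : M 1 = 1)
    (K : ℝ) (hK : 1 < K)
    (hlim : Tendsto (fun t => M (K * t) / M t) (𝓝[>] 0) atTop)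
    (x : Γ → ℝ) (hsum : Summable (fun γ => M |x γ|))
    (hx : ∑' γ, M |x γ| = 1)
    (hsumK : Summable (fun γ => M (K * |x γ|))) (A : Set Γ) :
    1 ≤ luxNorm M (A.indicator x) +
      (sSup ((fun τ => M τ / M (K * τ)) ''
        Set.Ioc 0 (⨆ γ : {γ : Γ // γ ∉ A}, |x γ.1|))) *
      ∑' γ, M (K * |x γ|) := by
  have hK0 : (0:ℝ) < K := lt_trans one_pos hK
  -- M nonneg on [0, ∞)
  have hMnn : ∀ t : ℝ, 0 ≤ t → 0 ≤ M t := by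
    intro t ht
    rcases eq_or_lt_of_le ht with h | h
    · simp [← h, h0]
    · exact (hpos t h).le
  -- M monotone on [0, ∞)
  have hMmono : ∀ a b : ℝ, 0 ≤ a → a ≤ b → M a ≤ M b := by
    intro a b ha hab
    rcases eq_or_lt_of_le (ha.trans hab) with hb | hb
    · have h1' : a = 0 := le_antisymm (hab.trans hb.symm.le) ha
      have h2' : b = 0 := hb.symm
      rw [h1', h2']
    · have hab' : a / b ≤ 1 := div_le_one_of_le₀ hab hb.le
      have key := hconv.2 (Set.mem_Ici.2 hb.le) (Set.mem_Ici.2 le_rfl)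
        (div_nonneg ha hb.le) (by linarith : (0:ℝ) ≤ 1 - a / b) (by ring)
      simp only [smul_eq_mul, mul_zero, h0, add_zero] at key
      rw [div_mul_cancel₀ _ hb.ne'] at key
      calc M a ≤ a / b * M b := key
        _ ≤ 1 * M b := by
            exact mul_le_mul_of_nonneg_right hab' (hMnn b hb.le)
        _ = M b := one_mul _
  -- scaling: M (ρ t) ≤ ρ M t for 0 < ρ ≤ 1, t ≥ 0
  have hscale : ∀ ρ t : ℝ, 0 ≤ ρ → ρ ≤ 1 → 0 ≤ t → M (ρ * t) ≤ ρ * M t := by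
    intro ρ t hρ0 hρ1 ht
    have key := hconv.2 (Set.mem_Ici.2 ht) (Set.mem_Ici.2 le_rfl)
      hρ0 (by linarith : (0:ℝ) ≤ 1 - ρ) (by ring)
    simpa [smul_eq_mul, h0] using key
  set f : Γ → ℝ := fun γ => M |x γ| with hf
  -- indicator facts
  have hindM : (fun γ => M |Set.indicator A x γ|) = A.indicator f := by
    funext γ; by_cases h : γ ∈ A <;> simp [Set.indicator_apply, h, h0, hf]
  have hsumInd : Summable (A.indicator f) := hsum.indicator A
  have hsumIndC : Summable (Aᶜ.indicator f) := hsum.indicator Aᶜ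
  set m := ∑' γ, A.indicator f γ with hm
  have hm_le : m ≤ 1 := by
    rw [hm, ← hx]
    exact Summable.tsum_le_tsum
      (fun γ => Set.indicator_le_self' (fun γ _ => hMnn _ (abs_nonneg _)) γ)
      hsumInd hsum
  -- finiteness for boundedness
  have hfin : {γ : Γ | ¬ M |x γ| < 1}.Finite := by
    have h := hsum.tendsto_cofinite_zero.eventually_lt_const one_pos
    rwa [Filter.eventually_cofinite] at h
  have hbdd : BddAbove (Set.range fun γ : {γ : Γ // γ ∉ A} => |x γ.1|) := by
    refine ⟨1 + ∑ γ ∈ hfin.toFinset, |x γ|, ?_⟩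
    rintro _ ⟨γ, rfl⟩
    have hsnn : 0 ≤ ∑ γ ∈ hfin.toFinset, |x γ| :=
      Finset.sum_nonneg fun _ _ => abs_nonneg _
    by_cases h : M |x γ.1| < 1
    · have : |x γ.1| < 1 := by
        by_contra hc
        push_neg at hc
        have := hMmono 1 _ zero_le_one hc
        rw [h1] at this
        exact absurd this (not_le.2 h)
      linarith
    · have hγ : γ.1 ∈ hfin.toFinset := by simpa using h
      have : |x γ.1| ≤ ∑ γ ∈ hfin.toFinset, |x γ| :=
        Finset.single_le_sum (fun i _ => abs_nonneg (x i)) hγ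
      linarith
  set s := ⨆ γ : {γ : Γ // γ ∉ A}, |x γ.1| with hs
  set ω := sSup ((fun τ => M τ / M (K * τ)) '' Set.Ioc 0 s) with hωdef
  have hωbdd : BddAbove ((fun τ => M τ / M (K * τ)) '' Set.Ioc 0 s) := by
    refine ⟨1, ?_⟩
    rintro _ ⟨τ, hτ, rfl⟩
    have hKτ : 0 < K * τ := mul_pos hK0 hτ.1
    have hKτ' : M τ ≤ M (K * τ) :=
      hMmono τ (K * τ) hτ.1.le (le_mul_of_one_le_left hτ.1.le hK.le)
    exact (div_le_one (hpos _ hKτ)).2 hKτ'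
  have hω0 : 0 ≤ ω := by
    apply Real.sSup_nonneg
    rintro _ ⟨τ, hτ, rfl⟩
    exact div_nonneg (hMnn _ hτ.1.le) (hMnn _ (mul_nonneg hK0.le hτ.1.le))
  -- pointwise bound off A
  have hcomp : ∀ γ : Γ, Aᶜ.indicator f γ ≤ ω * M (K * |x γ|) := by
    intro γ
    have hKγnn : (0:ℝ) ≤ K * |x γ| := mul_nonneg hK0.le (abs_nonneg _)
    by_cases h : γ ∈ A
    · have : Aᶜ.indicator f γ = 0 := Set.indicator_of_notMem (by simpa using h) f
      rw [this]
      exact mul_nonneg hω0 (hMnn _ hKγnn)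
    · rw [Set.indicator_of_mem (by simpa using h : γ ∈ Aᶜ) f]
      rcases eq_or_lt_of_le (abs_nonneg (x γ)) with h0' | h0'
      · show M |x γ| ≤ ω * M (K * |x γ|)
        rw [← h0', mul_zero, h0, mul_zero]
      · have hle : |x γ| ≤ s := le_ciSup hbdd ⟨γ, h⟩
        have hmem : M |x γ| / M (K * |x γ|) ∈
            (fun τ => M τ / M (K * τ)) '' Set.Ioc 0 s := ⟨|x γ|, ⟨h0', hle⟩, rfl⟩
        have hωge := le_csSup hωbdd hmem
        have hMK : 0 < M (K * |x γ|) := hpos _ (mul_pos hK0 h0')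
        calc f γ = M |x γ| / M (K * |x γ|) * M (K * |x γ|) :=
              (div_mul_cancel₀ _ hMK.ne').symm
          _ ≤ ω * M (K * |x γ|) := mul_le_mul_of_nonneg_right hωge hMK.le
  -- splitting of sum
  have hsplit : m + ∑' γ, Aᶜ.indicator f γ = 1 := by
    rw [hm, ← Summable.tsum_add hsumInd hsumIndC, ← hx]
    congr 1
    funext γ
    by_cases h : γ ∈ A <;> simp [Set.indicator_apply, h, hf]
  have htail : ∑' γ, Aᶜ.indicator f γ ≤ ω * ∑' γ, M (K * |x γ|) := by
    have := Summable.tsum_le_tsum hcomp hsumIndC (hsumK.mul_left ω)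
    rwa [tsum_mul_left] at this
  -- luxNorm lower bound
  set y := A.indicator x with hy
  set T := {ρ : ℝ | 0 < ρ ∧ ∑' γ, ENNReal.ofReal (M (|y γ| / ρ)) ≤ 1} with hT
  have hsumy : Summable fun γ => M |y γ| := by
    rw [hy, hindM]; exact hsumInd
  have htsumy : ∑' γ, M |y γ| = m := by rw [hy, hindM, hm]
  have hT1 : (1:ℝ) ∈ T := by
    refine ⟨one_pos, ?_⟩
    simp only [div_one]
    rw [← ENNReal.ofReal_tsum_of_nonneg (fun γ => hMnn _ (abs_nonneg _)) hsumy,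
      htsumy]
    exact ENNReal.ofReal_le_one.2 hm_le
  have hmlb : ∀ ρ ∈ T, m ≤ ρ := by
    rintro ρ ⟨hρ0, hρsum⟩
    rcases le_or_gt 1 ρ with hρ1 | hρ1
    · exact hm_le.trans hρ1
    · set g : Γ → ℝ := fun γ => M (|y γ| / ρ) with hg
      have hgnn : ∀ γ, 0 ≤ g γ := fun γ =>
        hMnn _ (div_nonneg (abs_nonneg _) hρ0.le)
      have hgsum : Summable g := by
        have hne : ∑' γ, ENNReal.ofReal (g γ) ≠ ⊤ :=
          ne_top_of_le_ne_top ENNReal.one_ne_top hρsum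
        have := ENNReal.summable_toReal hne
        exact this.congr fun γ => ENNReal.toReal_ofReal (hgnn γ)
      have hgt : ∑' γ, g γ ≤ 1 := by
        have heq := ENNReal.ofReal_tsum_of_nonneg hgnn hgsum
        rw [← heq] at hρsum
        exact ENNReal.ofReal_le_one.1 hρsum
      have hpt : ∀ γ, M |y γ| ≤ ρ * g γ := by
        intro γ
        have hrw : |y γ| = ρ * (|y γ| / ρ) := by field_simp
        rw [hrw]
        exact hscale ρ _ hρ0.le hρ1.le (div_nonneg (abs_nonneg _) hρ0.le)
      have hsumle : ∑' γ, M |y γ| ≤ ∑' γ, ρ * g γ :=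
        Summable.tsum_le_tsum hpt hsumy (hgsum.mul_left ρ)
      rw [tsum_mul_left, htsumy] at hsumle
      calc m ≤ ρ * ∑' γ, g γ := hsumle
        _ ≤ ρ * 1 := mul_le_mul_of_nonneg_left hgt hρ0.le
        _ = ρ := mul_one ρ
  have hlux : m ≤ luxNorm M y := le_csInf ⟨1, hT1⟩ hmlb
  have : luxNorm M (A.indicator x) = luxNorm M y := by rw [hy]
  rw [this]
  linarith
end

section
/- Let $X$ be a Banach space with a shrinking Schauder basis $(e_j)_{j=1}^\infty$ and suppose $X$ has a boundary $B = \bigcup_{m=1}^\infty K_m$ where each $K_m\subseteq S_{X^*}$ is norm-compact. Then there is a sequence $(a_n)$ of positive reals with $a_n\to 0$ such that for every $x\in X$, $\liminf_{n\to\infty} a_n^{-1}(\|x\| - \|P_n x\|) < \infty$, where $P_n$ is the basis projection onto the first $n$ coordinates. -/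
open Filter Topology

theorem stmt8 {X : Type*} [NormedAddCommGroup X] [NormedSpace ℝ X] [CompleteSpace X]
    (P : ℕ → X →L[ℝ] X)
    (hbasis : ∀ x : X, Tendsto (fun n => P n x) atTop (𝓝 x))
    (hshrink : ∀ f : X →L[ℝ] ℝ, Tendsto (fun n => ‖f - f.comp (P n)‖) atTop (𝓝 0))
    (Ks : ℕ → Set (X →L[ℝ] ℝ)) (hKcpt : ∀ m, IsCompact (Ks m))
    (hKsph : ∀ m, ∀ f ∈ Ks m, ‖f‖ = 1)
    (hbdry : ∀ x : X, ∃ m, ∃ f ∈ Ks m, f x = ‖x‖) :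
    ∃ a : ℕ → ℝ, (∀ n, 0 < a n) ∧ Tendsto a atTop (𝓝 0) ∧
      ∀ x : X, ∃ C : ℝ, ∃ᶠ n in atTop, ‖x‖ - ‖P n x‖ ≤ C * a n := by
  -- uniform bound on the projections
  obtain ⟨M, hM⟩ : ∃ M, ∀ n, ‖P n‖ ≤ M := by
    apply banach_steinhaus
    intro x
    obtain ⟨C, hC⟩ := ((hbasis x).norm).bddAbove_range
    exact ⟨C, fun n => hC ⟨n, rfl⟩⟩
  have hM0 : (0:ℝ) ≤ M := le_trans (norm_nonneg _) (hM 0)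
  -- uniform convergence on each compact
  have key : ∀ m, ∀ ε > (0:ℝ), ∃ N, ∀ n ≥ N, ∀ f ∈ Ks m, ‖f - f.comp (P n)‖ ≤ ε := by
    intro m ε hε
    have hδ : (0:ℝ) < ε / (2 * (1 + M)) := by positivity
    obtain ⟨t, htfin, htcover⟩ :=
      (Metric.totallyBounded_iff.mp (hKcpt m).totallyBounded) _ hδ
    have hN : ∀ y : X →L[ℝ] ℝ, ∃ N, ∀ n ≥ N, ‖y - y.comp (P n)‖ ≤ ε / 2 := by
      intro y
      have h2 : ∀ᶠ n in atTop, ‖y - y.comp (P n)‖ < ε / 2 :=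
        (hshrink y).eventually_lt_const (by positivity)
      obtain ⟨N, hN⟩ := eventually_atTop.mp h2
      exact ⟨N, fun n hn => (hN n hn).le⟩
    choose N' hN' using hN
    refine ⟨htfin.toFinset.sup N', fun n hn f hf => ?_⟩
    obtain ⟨y, hyt, hfy⟩ := Set.mem_iUnion₂.mp (htcover hf)
    have hfy' : ‖f - y‖ < ε / (2 * (1 + M)) := by
      rwa [Metric.mem_ball, dist_eq_norm] at hfy
    have hyn : ‖y - y.comp (P n)‖ ≤ ε / 2 := by
      refine hN' y n (le_trans ?_ hn)
      exact Finset.le_sup (htfin.mem_toFinset.mpr hyt)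
    have hdecomp : f - f.comp (P n) =
        ((f - y) - (f - y).comp (P n)) + (y - y.comp (P n)) := by
      rw [ContinuousLinearMap.sub_comp]; abel
    have hlip : ‖(f - y) - (f - y).comp (P n)‖ ≤ (1 + M) * ‖f - y‖ := by
      calc ‖(f - y) - (f - y).comp (P n)‖
          ≤ ‖f - y‖ + ‖(f - y).comp (P n)‖ := norm_sub_le _ _
        _ ≤ ‖f - y‖ + ‖f - y‖ * ‖P n‖ :=
            add_le_add le_rfl ((f - y).opNorm_comp_le (P n))
        _ ≤ ‖f - y‖ + ‖f - y‖ * M :=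
            add_le_add le_rfl (mul_le_mul_of_nonneg_left (hM n) (norm_nonneg _))
        _ = (1 + M) * ‖f - y‖ := by ring
    have h1 : ‖(f - y) - (f - y).comp (P n)‖ ≤ ε / 2 := by
      refine hlip.trans ?_
      have : (1 + M) * ‖f - y‖ ≤ (1 + M) * (ε / (2 * (1 + M))) :=
        mul_le_mul_of_nonneg_left hfy'.le (by positivity)
      refine this.trans_eq ?_
      field_simp
    calc ‖f - f.comp (P n)‖
        ≤ ‖(f - y) - (f - y).comp (P n)‖ + ‖y - y.comp (P n)‖ := by
          rw [hdecomp]; exact norm_add_le _ _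
      _ ≤ ε / 2 + ε / 2 := add_le_add h1 hyn
      _ = ε := by ring
  -- a diagonal sequence
  have h2 : ∀ k : ℕ, ∃ N, ∀ n ≥ N, ∀ j ≤ k, ∀ f ∈ Ks j,
      ‖f - f.comp (P n)‖ ≤ 1 / ((k : ℝ) + 2) := by
    intro k
    choose N hNk using fun j => key j (1 / ((k : ℝ) + 2)) (by positivity)
    refine ⟨(Finset.range (k + 1)).sup N, fun n hn j hj f hf => ?_⟩
    refine hNk j n (le_trans ?_ hn) f hf
    exact Finset.le_sup (Finset.mem_range.mpr (Nat.lt_succ_of_le hj))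
  choose Nk hNk using h2
  -- strictly increasing sequence e with e k ≥ Nk k
  set e : ℕ → ℕ := fun k => Nat.rec (Nk 0) (fun k ih => max (ih + 1) (Nk (k + 1))) k with he_def
  have he_succ : ∀ k, e (k + 1) = max (e k + 1) (Nk (k + 1)) := fun k => rfl
  have he_mono : StrictMono e := by
    apply strictMono_nat_of_lt_succ
    intro k
    rw [he_succ]
    exact lt_of_lt_of_le (Nat.lt_succ_self _) (le_max_left _ _)
  have he_Nk : ∀ k, Nk k ≤ e k := by
    intro k
    cases k with
    | zero => exact le_rfl
    | succ k => rw [he_succ]; exact le_max_right _ _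
  -- counting function and the sequence a
  set c : ℕ → ℕ := fun i => ((Finset.range (i + 1)).filter (fun k => e k ≤ i)).card with hc_def
  have hc_e : ∀ k, c (e k) = k + 1 := by
    intro k
    have : (Finset.range (e k + 1)).filter (fun k' => e k' ≤ e k) = Finset.range (k + 1) := by
      ext k'
      simp only [Finset.mem_filter, Finset.mem_range]
      constructor
      · rintro ⟨-, h⟩
        exact Nat.lt_succ_of_le (he_mono.le_iff_le.mp h)
      · intro h
        have hk' : k' ≤ k := Nat.lt_succ_iff.mp h
        have h1 : e k' ≤ e k := he_mono.monotone hk'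
        exact ⟨Nat.lt_succ_of_le (he_mono.le_apply.trans h1), h1⟩
    rw [hc_def]
    simp only [this, Finset.card_range]
  have hc_mono : Monotone c := by
    intro i i' hii
    refine Finset.card_le_card ?_
    intro k hk
    simp only [Finset.mem_filter, Finset.mem_range] at hk ⊢
    exact ⟨lt_of_lt_of_le hk.1 (by omega), hk.2.trans hii⟩
  have hc_top : Tendsto c atTop atTop := by
    refine tendsto_atTop_atTop.mpr fun b => ⟨e b, fun i hi => ?_⟩
    have := hc_mono hi
    rw [hc_e] at this
    omega
  refine ⟨fun i => 1 / ((c i : ℝ) + 1), fun i => by positivity, ?_, ?_⟩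
  · exact tendsto_one_div_add_atTop_nhds_zero_nat.comp hc_top
  · intro x
    obtain ⟨m, f, hfK, hfx⟩ := hbdry x
    refine ⟨‖x‖, frequently_atTop.mpr fun N => ?_⟩
    set k := max m N with hk_def
    refine ⟨e k, le_trans (le_max_right m N) (le_trans (he_mono.le_apply) le_rfl), ?_⟩
    have hbound : ‖f - f.comp (P (e k))‖ ≤ 1 / ((k : ℝ) + 2) :=
      hNk k (e k) (he_Nk k) m (le_max_left m N) f hfK
    have ha : (1 : ℝ) / ((c (e k) : ℝ) + 1) = 1 / ((k : ℝ) + 2) := by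
      rw [hc_e k]
      push_cast
      ring_nf
    have hfnorm : ‖f‖ = 1 := hKsph m f hfK
    have hfP : f ((P (e k)) x) ≤ ‖(P (e k)) x‖ := by
      calc f ((P (e k)) x) ≤ ‖f ((P (e k)) x)‖ := le_abs_self _
        _ ≤ ‖f‖ * ‖(P (e k)) x‖ := f.le_opNorm _
        _ = ‖(P (e k)) x‖ := by rw [hfnorm, one_mul]
    calc ‖x‖ - ‖(P (e k)) x‖ = f x - ‖(P (e k)) x‖ := by rw [hfx]
      _ ≤ f x - f ((P (e k)) x) := by linarith
      _ = (f - f.comp (P (e k))) x := by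
          simp [ContinuousLinearMap.sub_apply, ContinuousLinearMap.comp_apply]
      _ ≤ ‖(f - f.comp (P (e k))) x‖ := le_abs_self _
      _ ≤ ‖f - f.comp (P (e k))‖ * ‖x‖ := (f - f.comp (P (e k))).le_opNorm x
      _ ≤ (1 / ((k : ℝ) + 2)) * ‖x‖ :=
          mul_le_mul_of_nonneg_right hbound (norm_nonneg _)
      _ = ‖x‖ * (1 / ((c (e k) : ℝ) + 1)) := by rw [ha]; ring
end

section
/- For every sequence $(a_n)$ of positive reals with $a_n\to 0$, there exists $x\in c_0$ such that, with $P_n$ the basis projections of $c_0$ with respect to the summing basis $x_j = \sum_{i=1}^j e_i$, one has $\lim_{n\to\infty} a_n^{-1}(\|x\|_\infty - \|P_n x\|_\infty) = \infty$. -/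
open Filter Topology

theorem stmt11 (a : ℕ → ℝ) (hpos : ∀ n, 0 < a n) (ha : Tendsto a atTop (𝓝 0)) :
    ∃ x : ℕ → ℝ, Tendsto x atTop (𝓝 0) ∧
      Tendsto (fun n => (a n)⁻¹ *
          ((⨆ i, |x i|) - ⨆ i, |if i < n then x i - x n else 0|))
        atTop atTop := by
  obtain ⟨C, hC⟩ : BddAbove (Set.range a) := ha.bddAbove_range
  set b : ℕ → ℝ := fun n => ⨆ k : ℕ, a (n + k) with hb_def
  have hbdd : ∀ n, BddAbove (Set.range fun k => a (n + k)) := by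
    intro n
    exact ⟨C, by rintro _ ⟨k, rfl⟩; exact hC ⟨n + k, rfl⟩⟩
  have hab : ∀ n, a n ≤ b n := by
    intro n
    have := le_ciSup (hbdd n) 0
    simpa using this
  have hbpos : ∀ n, 0 < b n := fun n => lt_of_lt_of_le (hpos n) (hab n)
  have hanti : Antitone b := by
    intro m n hmn
    refine ciSup_le fun k => ?_
    have : a (n + k) = a (m + (n - m + k)) := by congr 1; omega
    rw [this]
    exact le_ciSup (hbdd m) _
  have hb0 : Tendsto b atTop (𝓝 0) := by
    rw [tendsto_order]
    constructor
    · intro c hc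
      exact Eventually.of_forall fun n => lt_trans hc (hbpos n)
    · intro c hc
      have : ∀ᶠ k in atTop, a k < c / 2 := (tendsto_order.1 ha).2 _ (by linarith)
      obtain ⟨N, hN⟩ := this.exists_forall_of_atTop
      filter_upwards [eventually_ge_atTop N] with n hn
      calc b n ≤ c / 2 := ciSup_le fun k => (hN (n + k) (by omega)).le
        _ < c := by linarith
  set x : ℕ → ℝ := fun n => Real.sqrt (b n) with hx_def
  have hxpos : ∀ n, 0 < x n := fun n => Real.sqrt_pos.2 (hbpos n)
  have hxanti : Antitone x := fun m n h => Real.sqrt_le_sqrt (hanti h)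
  have hx0 : Tendsto x atTop (𝓝 0) := by
    have := (Real.continuous_sqrt.tendsto 0).comp hb0
    simp only [Real.sqrt_zero] at this; exact this
  refine ⟨x, hx0, ?_⟩
  -- sup of |x i| is x 0
  have hsup1 : (⨆ i, |x i|) = x 0 := by
    apply le_antisymm
    · refine ciSup_le fun i => ?_
      rw [abs_of_pos (hxpos i)]
      exact hxanti (Nat.zero_le i)
    · have : |x 0| ≤ ⨆ i, |x i| := by
        refine le_ciSup (f := fun i => |x i|) ⟨x 0, ?_⟩ 0
        rintro _ ⟨i, rfl⟩
        simp only []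
        rw [abs_of_pos (hxpos i)]
        exact hxanti (Nat.zero_le i)
      rwa [abs_of_pos (hxpos 0)] at this
  -- sup of projected part, for n ≥ 1
  have hsup2 : ∀ n, 1 ≤ n → (⨆ i, |if i < n then x i - x n else 0|) = x 0 - x n := by
    intro n hn
    have hb : ∀ i, |if i < n then x i - x n else 0| ≤ x 0 - x n := by
      intro i
      by_cases h : i < n
      · rw [if_pos h, abs_of_nonneg (by linarith [hxanti h.le])]
        linarith [hxanti (Nat.zero_le i)]
      · rw [if_neg h]
        simp only [abs_zero]
        linarith [hxanti (Nat.zero_le n)]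
    apply le_antisymm
    · exact ciSup_le hb
    · have h0 : |if 0 < n then x 0 - x n else 0| = x 0 - x n := by
        rw [if_pos (by omega : (0:ℕ) < n), abs_of_nonneg (by linarith [hxanti (Nat.zero_le n)])]
      calc x 0 - x n = |if 0 < n then x 0 - x n else 0| := h0.symm
        _ ≤ _ := le_ciSup ⟨x 0 - x n, by rintro _ ⟨i, rfl⟩; exact hb i⟩ 0
  -- inverse sqrt tends to infinity
  have hinv : Tendsto (fun n => (x n)⁻¹) atTop atTop := by
    apply Filter.Tendsto.inv_tendsto_nhdsGT_zero
    rw [tendsto_nhdsWithin_iff]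
    exact ⟨hx0, Eventually.of_forall fun n => hxpos n⟩
  apply tendsto_atTop_mono' atTop _ hinv
  filter_upwards [eventually_ge_atTop 1] with n hn
  rw [hsup1, hsup2 n hn]
  have key : (x n)⁻¹ = (b n)⁻¹ * x n := by
    have h2 : x n * x n = b n := Real.mul_self_sqrt (hbpos n).le
    rw [← h2, mul_inv, mul_assoc, inv_mul_cancel₀ (hxpos n).ne', mul_one]
  rw [key]
  have : x 0 - (x 0 - x n) = x n := by ring
  rw [this]
  apply mul_le_mul_of_nonneg_right _ (hxpos n).le
  exact inv_anti₀ (hpos n) (hab n)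
end

section
/- Let $\|x\| = \sup\{(\sum_{k=1}^\infty 2^{-k} x(j_k)^2)^{1/2} : (j_k) \text{ a sequence of distinct naturals}\}$ be Day's norm on $c_0$. Then for every $x\in c_0$ and every $n\in\mathbb{N}$: $2^n(\|x\| - \sup_{|A|\le n}\|P_A x\|) \le 4\|x\|$, where $P_A x$ is $x$ restricted to the finite set $A\subseteq\mathbb{N}$. -/
open Filter Topology

noncomputable def dayNorm (x : ℕ → ℝ) : ℝ :=
  sSup {r : ℝ | ∃ j : ℕ → ℕ, Function.Injective j ∧
    r = Real.sqrt (∑' k, ((2:ℝ)⁻¹) ^ (k + 1) * x (j k) ^ 2)}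

private lemma summable_geom_mul (c : ℝ) : Summable (fun k : ℕ => ((2:ℝ)⁻¹) ^ (k + 1) * c) := by
  have h := (summable_geometric_of_lt_one (by norm_num : (0:ℝ) ≤ 2⁻¹) (by norm_num)).mul_right
    ((2:ℝ)⁻¹ * c)
  refine h.congr fun k => ?_
  ring

private lemma tsum_geom_mul (c : ℝ) : ∑' k : ℕ, ((2:ℝ)⁻¹) ^ (k + 1) * c = c := by
  have h1 : ∑' k : ℕ, ((2:ℝ)⁻¹) ^ k = 2 := by
    rw [tsum_geometric_of_lt_one (by norm_num) (by norm_num)]; norm_num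
  have h2 : ∀ k : ℕ, ((2:ℝ)⁻¹) ^ (k + 1) * c = ((2:ℝ)⁻¹) ^ k * (2⁻¹ * c) := by
    intro k; ring
  rw [tsum_congr h2, tsum_mul_right, h1]; ring

private lemma summable_day {x : ℕ → ℝ} {M : ℝ} (hM : ∀ i, |x i| ≤ M) (j : ℕ → ℕ) :
    Summable (fun k => ((2:ℝ)⁻¹) ^ (k + 1) * x (j k) ^ 2) := by
  refine Summable.of_nonneg_of_le (fun k => by positivity) (fun k => ?_) (summable_geom_mul (M ^ 2))
  have := hM (j k)
  have h2 : x (j k) ^ 2 ≤ M ^ 2 := by nlinarith [abs_nonneg (x (j k)), neg_abs_le (x (j k)), le_abs_self (x (j k))]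
  have h3 : (0:ℝ) ≤ ((2:ℝ)⁻¹) ^ (k + 1) := by positivity
  exact mul_le_mul_of_nonneg_left h2 h3

private lemma daySet_nonempty (x : ℕ → ℝ) :
    Set.Nonempty {r : ℝ | ∃ j : ℕ → ℕ, Function.Injective j ∧
      r = Real.sqrt (∑' k, ((2:ℝ)⁻¹) ^ (k + 1) * x (j k) ^ 2)} :=
  ⟨_, id, Function.injective_id, rfl⟩

private lemma daySet_bddAbove {x : ℕ → ℝ} {M : ℝ} (hM : ∀ i, |x i| ≤ M) :
    BddAbove {r : ℝ | ∃ j : ℕ → ℕ, Function.Injective j ∧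
      r = Real.sqrt (∑' k, ((2:ℝ)⁻¹) ^ (k + 1) * x (j k) ^ 2)} := by
  refine ⟨|M|, fun r hr => ?_⟩
  obtain ⟨j, hj, rfl⟩ := hr
  have h1 : ∑' k, ((2:ℝ)⁻¹) ^ (k + 1) * x (j k) ^ 2 ≤ M ^ 2 := by
    have := Summable.tsum_le_tsum (f := fun k => ((2:ℝ)⁻¹) ^ (k + 1) * x (j k) ^ 2)
      (g := fun k : ℕ => ((2:ℝ)⁻¹) ^ (k + 1) * M ^ 2) (fun k => by
        have := hM (j k)
        have h2 : x (j k) ^ 2 ≤ M ^ 2 := by nlinarith [abs_nonneg (x (j k)), neg_abs_le (x (j k)), le_abs_self (x (j k))]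
        have h3 : (0:ℝ) ≤ ((2:ℝ)⁻¹) ^ (k + 1) := by positivity
        exact mul_le_mul_of_nonneg_left h2 h3) (summable_day hM j) (summable_geom_mul _)
    calc _ ≤ _ := this
    _ = M ^ 2 := tsum_geom_mul _
  calc Real.sqrt (∑' k, ((2:ℝ)⁻¹) ^ (k + 1) * x (j k) ^ 2) ≤ Real.sqrt (M ^ 2) :=
        Real.sqrt_le_sqrt h1
  _ = |M| := Real.sqrt_sq_eq_abs M

private lemma sqrt_tsum_le_dayNorm {x : ℕ → ℝ} {M : ℝ} (hM : ∀ i, |x i| ≤ M) {j : ℕ → ℕ}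
    (hj : Function.Injective j) :
    Real.sqrt (∑' k, ((2:ℝ)⁻¹) ^ (k + 1) * x (j k) ^ 2) ≤ dayNorm x :=
  le_csSup (daySet_bddAbove hM) ⟨j, hj, rfl⟩

private lemma dayNorm_nonneg {x : ℕ → ℝ} {M : ℝ} (hM : ∀ i, |x i| ≤ M) : 0 ≤ dayNorm x :=
  le_trans (Real.sqrt_nonneg _) (sqrt_tsum_le_dayNorm hM Function.injective_id)

private lemma sq_le_two_mul {x : ℕ → ℝ} {M : ℝ} (hM : ∀ i, |x i| ≤ M) (i : ℕ) :
    x i ^ 2 ≤ 2 * dayNorm x ^ 2 := by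
  have hj : Function.Injective (fun k : ℕ => i + k) := fun a b h => by simpa using h
  have hsum := summable_day hM (fun k : ℕ => i + k)
  have h0 : ((2:ℝ)⁻¹) ^ (0 + 1) * x (i + 0) ^ 2 ≤
      ∑' k, ((2:ℝ)⁻¹) ^ (k + 1) * x (i + k) ^ 2 :=
    Summable.le_tsum hsum 0 (fun k _ => by positivity)
  have h1 : Real.sqrt (2⁻¹ * x i ^ 2) ≤ dayNorm x := by
    refine le_trans (Real.sqrt_le_sqrt ?_) (sqrt_tsum_le_dayNorm hM hj)
    simpa using h0
  have h2 : 2⁻¹ * x i ^ 2 ≤ dayNorm x ^ 2 := by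
    have h3 : Real.sqrt (2⁻¹ * x i ^ 2) ^ 2 ≤ dayNorm x ^ 2 :=
      pow_le_pow_left₀ (Real.sqrt_nonneg _) h1 2
    rwa [Real.sq_sqrt (by positivity)] at h3
  linarith

private lemma abs_proj_le {x : ℕ → ℝ} {M : ℝ} (hM : ∀ i, |x i| ≤ M) (A : Finset ℕ) :
    ∀ i, |(fun i => if i ∈ A then x i else 0) i| ≤ M := by
  intro i
  by_cases h : i ∈ A <;> simp [h]
  · exact hM i
  · exact le_trans (abs_nonneg (x 0)) (hM 0)

private lemma dayNorm_proj_le {x : ℕ → ℝ} {M : ℝ} (hM : ∀ i, |x i| ≤ M) (A : Finset ℕ) :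
    dayNorm (fun i => if i ∈ A then x i else 0) ≤ dayNorm x := by
  rw [show dayNorm (fun i => if i ∈ A then x i else 0) = sSup {r : ℝ | ∃ j : ℕ → ℕ,
      Function.Injective j ∧ r = Real.sqrt (∑' k,
      ((2:ℝ)⁻¹) ^ (k + 1) * (fun i => if i ∈ A then x i else 0) (j k) ^ 2)} from rfl]
  refine csSup_le ⟨_, id, Function.injective_id, rfl⟩ ?_
  rintro r ⟨j, hj, rfl⟩
  refine le_trans (Real.sqrt_le_sqrt ?_) (sqrt_tsum_le_dayNorm hM hj)
  refine Summable.tsum_le_tsum (fun k => ?_) (summable_day (abs_proj_le hM A) j) (summable_day hM j)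
  have h3 : (0:ℝ) ≤ ((2:ℝ)⁻¹) ^ (k + 1) := by positivity
  refine mul_le_mul_of_nonneg_left ?_ h3
  by_cases h : j k ∈ A <;> simp [h] <;> positivity

theorem stmt12 (x : ℕ → ℝ) (hx : Tendsto x atTop (𝓝 0)) (n : ℕ) :
    2 ^ n * (dayNorm x - ⨆ A : {A : Finset ℕ // A.card ≤ n},
        dayNorm (fun i => if i ∈ A.1 then x i else 0)) ≤ 4 * dayNorm x := by
  -- boundedness of x
  obtain ⟨M, hMub⟩ := (hx.abs.congr' (by simp) |>.bddAbove_range : BddAbove (Set.range fun i => |x i|))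
  have hM : ∀ i, |x i| ≤ M := fun i => hMub ⟨i, rfl⟩
  set N := dayNorm x with hNdef
  have hN0 : 0 ≤ N := dayNorm_nonneg hM
  haveI : Nonempty {A : Finset ℕ // A.card ≤ n} := ⟨⟨∅, by simp⟩⟩
  have hbddS : BddAbove (Set.range fun A : {A : Finset ℕ // A.card ≤ n} =>
      dayNorm (fun i => if i ∈ A.1 then x i else 0)) := by
    refine ⟨N, ?_⟩
    rintro r ⟨A, rfl⟩
    exact dayNorm_proj_le hM A.1
  set S := ⨆ A : {A : Finset ℕ // A.card ≤ n},
      dayNorm (fun i => if i ∈ A.1 then x i else 0) with hSdef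
  have hSN : S ≤ N := ciSup_le fun A => dayNorm_proj_le hM A.1
  rcases le_or_gt N 0 with hNle | hNpos
  · -- N = 0, x = 0
    have hNz : N = 0 := le_antisymm hNle hN0
    have hx0 : ∀ i, x i = 0 := by
      intro i
      have := sq_le_two_mul hM i
      rw [← hNdef, hNz] at this
      nlinarith [sq_nonneg (x i)]
    have hSz : S = N := by
      rw [hSdef]
      have : ∀ A : {A : Finset ℕ // A.card ≤ n},
          dayNorm (fun i => if i ∈ A.1 then x i else 0) = N := by
        intro A
        rw [hNdef]
        congr 1
        funext i
        by_cases h : i ∈ A.1 <;> simp [h, hx0 i]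
      rw [iSup_congr this]
      exact ciSup_const
    rw [hSz, hNz]
    norm_num
  · -- main case
    have key : ∀ ε : ℝ, 0 < ε → N ≤ (S + 4 * N * ((2:ℝ)⁻¹) ^ n) + ε := by
      intro ε hε
      set δ := min ε (N / 2) with hδdef
      have hδ0 : 0 < δ := lt_min hε (by linarith)
      have hδN : δ ≤ N / 2 := min_le_right _ _
      have hδε : δ ≤ ε := min_le_left _ _
      have hNδ : 0 < N - δ := by linarith
      obtain ⟨r, hrmem, hrlt⟩ := exists_lt_of_lt_csSup (daySet_nonempty x)
        (show N - δ < sSup _ from by rw [← dayNorm]; exact by linarith)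
      obtain ⟨j, hj, rfl⟩ := hrmem
      set f := fun k : ℕ => ((2:ℝ)⁻¹) ^ (k + 1) * x (j k) ^ 2 with hfdef
      have hsum : Summable f := summable_day hM j
      set T := ∑' k, f k with hTdef
      have hT0 : 0 ≤ T := tsum_nonneg fun k => by positivity
      set A : Finset ℕ := (Finset.range n).image j with hAdef
      have hAcard : A.card ≤ n := le_trans Finset.card_image_le (by simp)
      set H := ∑ k ∈ Finset.range n, f k with hHdef
      have hH0 : 0 ≤ H := Finset.sum_nonneg fun k _ => by positivity
      have hsplit : H + ∑' k, f (k + n) = T := Summable.sum_add_tsum_nat_add n hsum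
      -- tail bound
      have hTail : ∑' k, f (k + n) ≤ 2 * N ^ 2 * ((2:ℝ)⁻¹) ^ n := by
        have hle : ∀ k : ℕ, f (k + n) ≤ ((2:ℝ)⁻¹) ^ (k + 1) * (((2:ℝ)⁻¹) ^ n * (2 * N ^ 2)) := by
          intro k
          have h1 : x (j (k + n)) ^ 2 ≤ 2 * N ^ 2 := sq_le_two_mul hM _
          have h2 : ((2:ℝ)⁻¹) ^ (k + n + 1) = ((2:ℝ)⁻¹) ^ (k + 1) * ((2:ℝ)⁻¹) ^ n := by ring
          rw [hfdef]
          simp only []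
          rw [h2, mul_assoc]
          refine mul_le_mul_of_nonneg_left ?_ (by positivity)
          exact mul_le_mul_of_nonneg_left h1 (by positivity)
        calc ∑' k, f (k + n) ≤ ∑' k : ℕ, ((2:ℝ)⁻¹) ^ (k + 1) * (((2:ℝ)⁻¹) ^ n * (2 * N ^ 2)) :=
              Summable.tsum_le_tsum hle ((summable_nat_add_iff n).2 hsum) (summable_geom_mul _)
        _ = ((2:ℝ)⁻¹) ^ n * (2 * N ^ 2) := tsum_geom_mul _
        _ = 2 * N ^ 2 * ((2:ℝ)⁻¹) ^ n := by ring
      -- sqrt H ≤ S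
      have hsqrtHS : Real.sqrt H ≤ S := by
        set y := fun i => if i ∈ A then x i else 0 with hydef
        have hHle : H ≤ ∑' k, ((2:ℝ)⁻¹) ^ (k + 1) * y (j k) ^ 2 := by
          have heq : H = ∑ k ∈ Finset.range n, ((2:ℝ)⁻¹) ^ (k + 1) * y (j k) ^ 2 := by
            refine Finset.sum_congr rfl fun k hk => ?_
            have : j k ∈ A := Finset.mem_image_of_mem j hk
            simp [hydef, this, hfdef]
          rw [heq]
          exact Summable.sum_le_tsum _ (fun k _ => by positivity) (summable_day (abs_proj_le hM A) j)
        have h1 : Real.sqrt H ≤ dayNorm y :=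
          le_trans (Real.sqrt_le_sqrt hHle) (sqrt_tsum_le_dayNorm (abs_proj_le hM A) hj)
        exact le_trans h1 (le_ciSup hbddS ⟨A, hAcard⟩)
      -- sqrt T - sqrt H bound
      have hkey1 : Real.sqrt T - Real.sqrt H ≤ (2 * N ^ 2 * ((2:ℝ)⁻¹) ^ n) / (N - δ) := by
        rw [le_div_iff₀ hNδ]
        rcases le_or_gt (Real.sqrt T) (Real.sqrt H) with hc | hc
        · have : (Real.sqrt T - Real.sqrt H) * (N - δ) ≤ 0 :=
            mul_nonpos_of_nonpos_of_nonneg (by linarith) (by linarith)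
          have hpos : (0:ℝ) ≤ 2 * N ^ 2 * ((2:ℝ)⁻¹) ^ n := by positivity
          linarith
        · have hsT : Real.sqrt T ^ 2 = T := Real.sq_sqrt hT0
          have hsH : Real.sqrt H ^ 2 = H := Real.sq_sqrt hH0
          have hTH : T - H ≤ 2 * N ^ 2 * ((2:ℝ)⁻¹) ^ n := by linarith
          have hsH0 : 0 ≤ Real.sqrt H := Real.sqrt_nonneg _
          nlinarith [hrlt]
      have hdiv : (2 * N ^ 2 * ((2:ℝ)⁻¹) ^ n) / (N - δ) ≤ 4 * N * ((2:ℝ)⁻¹) ^ n := by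
        rw [div_le_iff₀ hNδ]
        have hp : (0:ℝ) ≤ ((2:ℝ)⁻¹) ^ n := by positivity
        nlinarith [mul_nonneg (mul_nonneg (show (0:ℝ) ≤ 2*N by linarith) (show (0:ℝ) ≤ N - 2*δ by linarith)) hp]
      have : N - δ < Real.sqrt T := hrlt
      linarith
    have hfin : N ≤ S + 4 * N * ((2:ℝ)⁻¹) ^ n := le_of_forall_pos_le_add key
    have h2 : (2:ℝ) ^ n * ((2:ℝ)⁻¹) ^ n = 1 := by
      rw [← mul_pow]; norm_num
    have hpow : (0:ℝ) < 2 ^ n := by positivity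
    have := mul_le_mul_of_nonneg_left (show N - S ≤ 4 * N * ((2:ℝ)⁻¹) ^ n by linarith) hpow.le
    calc (2:ℝ) ^ n * (N - S) ≤ 2 ^ n * (4 * N * ((2:ℝ)⁻¹) ^ n) := this
    _ = 4 * N * ((2:ℝ) ^ n * ((2:ℝ)⁻¹) ^ n) := by ring
    _ = 4 * N := by rw [h2, mul_one]
end

section
/- Let $\|\cdot\|$ be Day's norm on $c_0$ (defined as $\|x\| = \sup\{(\sum_k 2^{-k}x(j_k)^2)^{1/2}\}$ over sequences of distinct indices). For every sequence $(a_n)$ of positive reals tending to $0$, there exists $x\in c_0$ with $\|x\|=1$ such that $\lim_{n\to\infty} a_n^{-1}(\|x\| - \|P_n x\|) = \infty$, where $P_n$ restricts to the first $n$ coordinates. -/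
open Filter Topology

namespace Day13

noncomputable def cseq (m : ℕ) : ℝ := Real.sqrt (3 * (2:ℝ)⁻¹ ^ (m + 1))

lemma cseq_nonneg (m : ℕ) : 0 ≤ cseq m := Real.sqrt_nonneg _

lemma cseq_sq (m : ℕ) : cseq m ^ 2 = 3 * (2:ℝ)⁻¹ ^ (m + 1) :=
  Real.sq_sqrt (by positivity)

open Classical in
noncomputable def xfun (N : ℕ → ℕ) (i : ℕ) : ℝ :=
  if h : ∃ m, N m = i then cseq h.choose else 0

lemma xfun_apply {N : ℕ → ℕ} (hN : Function.Injective N) (m : ℕ) :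
    xfun N (N m) = cseq m := by
  have h : ∃ m', N m' = N m := ⟨m, rfl⟩
  rw [xfun, dif_pos h, hN h.choose_spec]

lemma xfun_of_ne_zero {N : ℕ → ℕ} {i : ℕ} (h : xfun N i ≠ 0) : i ∈ Set.range N := by
  by_contra hc
  refine h ?_
  rw [xfun, dif_neg]
  rintro ⟨m, hm⟩
  exact hc ⟨m, hm⟩

lemma xfun_nonneg (N : ℕ → ℕ) (i : ℕ) : 0 ≤ xfun N i := by
  rw [xfun]
  split
  · exact cseq_nonneg _
  · exact le_rfl

lemma xfun_zero_off {N : ℕ → ℕ} : ∀ i ∉ Set.range N, xfun N i ^ 4 = 0 := by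
  intro i hi
  have : xfun N i = 0 := by
    by_contra hc
    exact hi (xfun_of_ne_zero hc)
  rw [this]; norm_num

lemma summable_geom_succ {r : ℝ} (h0 : 0 ≤ r) (h1 : r < 1) :
    Summable fun k : ℕ => r ^ (k + 1) := by
  have := (summable_geometric_of_lt_one h0 h1).mul_left r
  simpa [pow_succ, mul_comm] using this

lemma tsum_geom_succ {r : ℝ} (h0 : 0 ≤ r) (h1 : r < 1) :
    ∑' k : ℕ, r ^ (k + 1) = r / (1 - r) := by
  have h : (fun k : ℕ => r ^ (k + 1)) = fun k : ℕ => r * r ^ k := by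
    funext k; rw [pow_succ, mul_comm]
  rw [h, tsum_mul_left, tsum_geometric_of_lt_one h0 h1, div_eq_mul_inv]

lemma summable_geom4 : Summable fun k : ℕ => ((4:ℝ)⁻¹) ^ (k + 1) :=
  summable_geom_succ (by norm_num) (by norm_num)

lemma tsum_geom4 : ∑' k : ℕ, ((4:ℝ)⁻¹) ^ (k + 1) = 1 / 3 := by
  rw [tsum_geom_succ (by norm_num) (by norm_num)]
  norm_num

lemma four_eq_two_mul (k : ℕ) :
    ((4:ℝ)⁻¹) ^ (k + 1) = ((2:ℝ)⁻¹) ^ (k + 1) * ((2:ℝ)⁻¹) ^ (k + 1) := by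
  rw [← mul_pow]; norm_num

/-- The key AM-GM bound on the terms of the Day norm sum. -/
lemma term_bound (z : ℕ → ℝ) (j : ℕ → ℕ) (k : ℕ) :
    ((2:ℝ)⁻¹) ^ (k + 1) * z (j k) ^ 2 ≤
      3 / 2 * ((4:ℝ)⁻¹) ^ (k + 1) + z (j k) ^ 4 / 6 := by
  have e1 := four_eq_two_mul k
  nlinarith [sq_nonneg (3 * ((2:ℝ)⁻¹) ^ (k + 1) - z (j k) ^ 2)]

lemma summable_majorant {z : ℕ → ℝ} (hz : Summable fun i => z i ^ 4) {j : ℕ → ℕ}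
    (hj : Function.Injective j) :
    Summable fun k => 3 / 2 * ((4:ℝ)⁻¹) ^ (k + 1) + z (j k) ^ 4 / 6 :=
  ((summable_geom4.mul_left _)).add ((hz.comp_injective hj).div_const _)

lemma summable_day_terms {z : ℕ → ℝ} (hz : Summable fun i => z i ^ 4) {j : ℕ → ℕ}
    (hj : Function.Injective j) :
    Summable fun k => ((2:ℝ)⁻¹) ^ (k + 1) * z (j k) ^ 2 :=
  Summable.of_nonneg_of_le (fun k => by positivity) (term_bound z j)
    (summable_majorant hz hj)

lemma tsum_bound {z : ℕ → ℝ} {A : ℝ} (hz : Summable fun i => z i ^ 4)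
    (hA : ∑' i, z i ^ 4 ≤ A) {j : ℕ → ℕ} (hj : Function.Injective j) :
    (∑' k, ((2:ℝ)⁻¹) ^ (k + 1) * z (j k) ^ 2) ≤ 1 / 2 + A / 6 := by
  have hsum4 : Summable fun k => z (j k) ^ 4 := hz.comp_injective hj
  have hle4 : (∑' k, z (j k) ^ 4) ≤ ∑' i, z i ^ 4 :=
    Summable.tsum_le_tsum_of_inj j hj (fun c _ => by positivity) (fun k => le_rfl) hsum4 hz
  calc (∑' k, ((2:ℝ)⁻¹) ^ (k + 1) * z (j k) ^ 2)
      ≤ ∑' k, (3 / 2 * ((4:ℝ)⁻¹) ^ (k + 1) + z (j k) ^ 4 / 6) :=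
        Summable.tsum_le_tsum (term_bound z j) (summable_day_terms hz hj)
          (summable_majorant hz hj)
    _ = 3 / 2 * (∑' k, ((4:ℝ)⁻¹) ^ (k + 1)) + (∑' k, z (j k) ^ 4) / 6 := by
        rw [Summable.tsum_add (summable_geom4.mul_left _) (hsum4.div_const _),
          tsum_mul_left, tsum_div_const]
    _ ≤ 3 / 2 * (1 / 3) + A / 6 := by
        rw [tsum_geom4]
        have : (∑' k, z (j k) ^ 4) ≤ A := le_trans hle4 hA
        linarith
    _ = 1 / 2 + A / 6 := by norm_num

lemma dayNorm_le {z : ℕ → ℝ} {A : ℝ} (hz : Summable fun i => z i ^ 4)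
    (hA : ∑' i, z i ^ 4 ≤ A) : dayNorm z ≤ Real.sqrt (1 / 2 + A / 6) := by
  apply Real.sSup_le _ (Real.sqrt_nonneg _)
  rintro r ⟨j, hj, rfl⟩
  exact Real.sqrt_le_sqrt (tsum_bound hz hA hj)

lemma dayNorm_bddAbove {z : ℕ → ℝ} {A : ℝ} (hz : Summable fun i => z i ^ 4)
    (hA : ∑' i, z i ^ 4 ≤ A) :
    BddAbove {r : ℝ | ∃ j : ℕ → ℕ, Function.Injective j ∧
      r = Real.sqrt (∑' k, ((2:ℝ)⁻¹) ^ (k + 1) * z (j k) ^ 2)} := by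
  refine ⟨Real.sqrt (1 / 2 + A / 6), ?_⟩
  rintro r ⟨j, hj, rfl⟩
  exact Real.sqrt_le_sqrt (tsum_bound hz hA hj)

section WithN

variable {N : ℕ → ℕ} (hN : StrictMono N)

include hN

lemma x4_pow (m : ℕ) : xfun N (N m) ^ 4 = 9 * ((4:ℝ)⁻¹) ^ (m + 1) := by
  rw [xfun_apply hN.injective]
  have := cseq_sq m
  have e := four_eq_two_mul m
  nlinarith [cseq_nonneg m]

lemma summable_x4 : Summable fun i => xfun N i ^ 4 := by
  refine (Function.Injective.summable_iff hN.injective xfun_zero_off).mp ?_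
  have h : ((fun i => xfun N i ^ 4) ∘ N) = fun m => 9 * ((4:ℝ)⁻¹) ^ (m + 1) := by
    funext m
    exact x4_pow hN m
  rw [h]
  exact summable_geom4.mul_left 9

lemma tsum_x4 : ∑' i, xfun N i ^ 4 = 3 := by
  have hsupp : Function.support (fun i => xfun N i ^ 4) ⊆ Set.range N := by
    intro i hi
    simp only [Function.mem_support] at hi
    by_contra hc
    exact hi (xfun_zero_off i hc)
  calc (∑' i, xfun N i ^ 4) = ∑' m, xfun N (N m) ^ 4 :=
        (Function.Injective.tsum_eq hN.injective hsupp).symm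
    _ = ∑' m, 9 * ((4:ℝ)⁻¹) ^ (m + 1) := tsum_congr (x4_pow hN)
    _ = 3 := by rw [tsum_mul_left, tsum_geom4]; norm_num

lemma dayNorm_x : dayNorm (xfun N) = 1 := by
  have hs := summable_x4 hN
  have ht : ∑' i, xfun N i ^ 4 ≤ 3 := le_of_eq (tsum_x4 hN)
  have hsqrt : Real.sqrt (1 / 2 + 3 / 6) = 1 := by
    rw [Real.sqrt_eq_one]; norm_num
  have hub : dayNorm (xfun N) ≤ 1 := (dayNorm_le hs ht).trans_eq hsqrt
  have hmem : (1:ℝ) ∈ {r : ℝ | ∃ j : ℕ → ℕ, Function.Injective j ∧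
      r = Real.sqrt (∑' k, ((2:ℝ)⁻¹) ^ (k + 1) * xfun N (j k) ^ 2)} := by
    refine ⟨N, hN.injective, ?_⟩
    have hterm : (∑' k, ((2:ℝ)⁻¹) ^ (k + 1) * xfun N (N k) ^ 2) =
        ∑' k : ℕ, 3 * ((4:ℝ)⁻¹) ^ (k + 1) := by
      refine tsum_congr fun k => ?_
      rw [xfun_apply hN.injective, cseq_sq, four_eq_two_mul]
      ring
    rw [hterm, tsum_mul_left, tsum_geom4]
    norm_num [Real.sqrt_one]
  have hlb : (1:ℝ) ≤ dayNorm (xfun N) := le_csSup (dayNorm_bddAbove hs ht) hmem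
  exact le_antisymm hub hlb

omit hN in
lemma finsum_geom4 (K : ℕ) :
    ∑ i ∈ Finset.range K, ((4:ℝ)⁻¹) ^ (i + 1) = (1 - ((4:ℝ)⁻¹) ^ K) / 3 := by
  induction K with
  | zero => simp
  | succ K ih => rw [Finset.sum_range_succ, ih, pow_succ]; ring

lemma summable_y4 (n : ℕ) :
    Summable fun i => (if i < n then xfun N i else 0) ^ 4 := by
  refine Summable.of_nonneg_of_le (fun i => by positivity) (fun i => ?_) (summable_x4 hN)
  split
  · exact le_rfl
  · have h0 : ((0:ℝ)) ^ 4 = 0 := by norm_num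
    rw [h0]
    positivity

lemma tsum_y4_le {n m : ℕ} (hnm : n ≤ N (m + 1)) :
    ∑' i, (if i < n then xfun N i else 0) ^ 4 ≤ 3 * (1 - ((4:ℝ)⁻¹) ^ (m + 1)) := by
  set y : ℕ → ℝ := fun i => if i < n then xfun N i else 0 with hy
  have hsupp : Function.support (fun i => y i ^ 4) ⊆ Set.range N := by
    intro i hi
    simp only [Function.mem_support, ne_eq] at hi
    have h1 : y i ≠ 0 := fun h => hi (by rw [h]; norm_num)
    have h2 : xfun N i ≠ 0 := by
      intro h
      apply h1
      simp only [hy]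
      split <;> simp [h]
    exact xfun_of_ne_zero h2
  rw [← Function.Injective.tsum_eq hN.injective hsupp]
  have hpt : ∀ m'' : ℕ, y (N m'') ^ 4 ≤
      (if m'' < m + 1 then 9 * ((4:ℝ)⁻¹) ^ (m'' + 1) else 0) := by
    intro m''
    by_cases h : m'' < m + 1
    · rw [if_pos h]
      have hle : y (N m'') ^ 4 ≤ xfun N (N m'') ^ 4 := by
        simp only [hy]
        split
        · exact le_rfl
        · have h0 : ((0:ℝ)) ^ 4 = 0 := by norm_num
          rw [h0]
          positivity
      exact hle.trans_eq (x4_pow hN m'')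
    · rw [if_neg h]
      have hge : n ≤ N m'' := hnm.trans (hN.le_iff_le.mpr (Nat.le_of_not_lt h))
      have h0 : y (N m'') = 0 := by
        simp only [hy, if_neg (Nat.not_lt.mpr hge)]
      rw [h0]
      norm_num
  have hgsum : Summable fun m'' : ℕ =>
      (if m'' < m + 1 then 9 * ((4:ℝ)⁻¹) ^ (m'' + 1) else 0) := by
    apply summable_of_finite_support
    apply Set.Finite.subset (Set.finite_Iio (m + 1))
    intro m'' hm''
    simp only [Function.mem_support, ne_eq] at hm''
    by_contra hc
    exact hm'' (if_neg (by simpa [Set.mem_Iio] using hc))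
  have hy4 : Summable fun m'' => y (N m'') ^ 4 :=
    (summable_y4 hN n).comp_injective hN.injective
  calc (∑' m'', y (N m'') ^ 4)
      ≤ ∑' m'', (if m'' < m + 1 then 9 * ((4:ℝ)⁻¹) ^ (m'' + 1) else 0) :=
        Summable.tsum_le_tsum hpt hy4 hgsum
    _ = ∑ m'' ∈ Finset.range (m + 1),
          (if m'' < m + 1 then 9 * ((4:ℝ)⁻¹) ^ (m'' + 1) else 0) := by
        apply tsum_eq_sum
        intro b hb
        rw [if_neg (by simpa using hb)]
    _ = ∑ m'' ∈ Finset.range (m + 1), 9 * ((4:ℝ)⁻¹) ^ (m'' + 1) := by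
        apply Finset.sum_congr rfl
        intro i hi
        rw [if_pos (Finset.mem_range.mp hi)]
    _ = 3 * (1 - ((4:ℝ)⁻¹) ^ (m + 1)) := by
        rw [← Finset.mul_sum, finsum_geom4]
        ring

lemma dayNorm_trunc_le {n m : ℕ} (hnm : n ≤ N (m + 1)) :
    dayNorm (fun i => if i < n then xfun N i else 0) ≤ 1 - ((4:ℝ)⁻¹) ^ (m + 1) / 4 := by
  set q : ℝ := ((4:ℝ)⁻¹) ^ (m + 1) with hq
  have hq0 : 0 < q := by positivity
  have hq1 : q ≤ 1 := by
    rw [hq]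
    calc ((4:ℝ)⁻¹) ^ (m + 1) ≤ ((4:ℝ)⁻¹) ^ 0 :=
          pow_le_pow_of_le_one (by norm_num) (by norm_num) (Nat.zero_le _)
      _ = 1 := pow_zero _
  have h1 : dayNorm (fun i => if i < n then xfun N i else 0) ≤
      Real.sqrt (1 / 2 + 3 * (1 - q) / 6) :=
    dayNorm_le (summable_y4 hN n) (tsum_y4_le hN hnm)
  have h2 : Real.sqrt (1 / 2 + 3 * (1 - q) / 6) ≤ 1 - q / 4 := by
    rw [show (1:ℝ) - q / 4 = Real.sqrt ((1 - q / 4) ^ 2) from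
      (Real.sqrt_sq (by linarith)).symm]
    apply Real.sqrt_le_sqrt
    nlinarith
  exact h1.trans h2

lemma tendsto_x : Tendsto (xfun N) atTop (𝓝 0) := by
  rw [Metric.tendsto_atTop]
  intro ε hε
  obtain ⟨M, hM⟩ : ∃ M : ℕ, 3 * ((2:ℝ)⁻¹) ^ (M + 1) < ε ^ 2 := by
    obtain ⟨M, hM⟩ := exists_pow_lt_of_lt_one (show (0:ℝ) < ε ^ 2 / 3 by positivity)
      (show (2:ℝ)⁻¹ < 1 by norm_num)
    refine ⟨M, ?_⟩
    have h : ((2:ℝ)⁻¹) ^ (M + 1) ≤ ((2:ℝ)⁻¹) ^ M :=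
      pow_le_pow_of_le_one (by norm_num) (by norm_num) (Nat.le_succ M)
    nlinarith
  refine ⟨N M + 1, fun i hi => ?_⟩
  rw [Real.dist_eq, sub_zero, abs_of_nonneg (xfun_nonneg N i)]
  by_cases hz : xfun N i = 0
  · rw [hz]; exact hε
  · obtain ⟨m', rfl⟩ := xfun_of_ne_zero hz
    have hm' : M < m' := by
      rw [← hN.lt_iff_lt]
      omega
    rw [xfun_apply hN.injective, cseq, Real.sqrt_lt' hε]
    have h : ((2:ℝ)⁻¹) ^ (m' + 1) ≤ ((2:ℝ)⁻¹) ^ (M + 1) :=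
      pow_le_pow_of_le_one (by norm_num) (by norm_num) (by omega)
    nlinarith

end WithN

end Day13

open Day13 in
theorem stmt13 (a : ℕ → ℝ) (hpos : ∀ n, 0 < a n) (ha : Tendsto a atTop (𝓝 0)) :
    ∃ x : ℕ → ℝ, Tendsto x atTop (𝓝 0) ∧ dayNorm x = 1 ∧
      Tendsto (fun n => (a n)⁻¹ * (1 - dayNorm fun i => if i < n then x i else 0))
        atTop atTop := by
  have hev : ∀ m : ℕ, ∀ᶠ n in atTop, a n < ((8:ℝ)⁻¹) ^ (m + 1) := fun m =>
    ha.eventually (gt_mem_nhds (by positivity))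
  choose K hK using fun m => eventually_atTop.mp (hev m)
  set N : ℕ → ℕ := fun m => Nat.rec (K 0) (fun m' ih => max (ih + 1) (K (m' + 1))) m
    with hNdef
  have hNsucc : ∀ m, N (m + 1) = max (N m + 1) (K (m + 1)) := by
    intro m
    simp only [hNdef]
  have hmono : StrictMono N := strictMono_nat_of_lt_succ fun m => by
    rw [hNsucc]
    exact lt_of_lt_of_le (Nat.lt_succ_self _) (le_max_left _ _)
  have hNK : ∀ m, K m ≤ N m := by
    intro m
    cases m with
    | zero => simp only [hNdef]; exact le_rfl
    | succ m => rw [hNsucc]; exact le_max_right _ _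
  have haN : ∀ m n, N m ≤ n → a n < ((8:ℝ)⁻¹) ^ (m + 1) := fun m n h =>
    hK m n (le_trans (hNK m) h)
  refine ⟨xfun N, tendsto_x hmono, dayNorm_x hmono, ?_⟩
  rw [tendsto_atTop]
  intro b
  obtain ⟨M, hM⟩ : ∃ M : ℕ, b < (2:ℝ) ^ (M + 1) / 4 := by
    obtain ⟨M, hM⟩ := pow_unbounded_of_one_lt (4 * b) (show (1:ℝ) < 2 by norm_num)
    refine ⟨M, ?_⟩
    have h : (2:ℝ) ^ M ≤ (2:ℝ) ^ (M + 1) :=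
      pow_le_pow_right₀ (by norm_num) (Nat.le_succ M)
    nlinarith
  filter_upwards [eventually_ge_atTop (N M)] with n hn
  -- largest m' with N m' ≤ n
  set m' : ℕ := Nat.findGreatest (fun t => N t ≤ n) n with hm'def
  have hMn : M ≤ n := le_trans hmono.le_apply hn
  have hm'spec : N m' ≤ n :=
    Nat.findGreatest_spec (P := fun t => N t ≤ n) hMn hn
  have hm'ge : M ≤ m' := Nat.le_findGreatest (P := fun t => N t ≤ n) hMn hn
  have hlt : n < N (m' + 1) := by
    by_contra hc
    push_neg at hc
    have h1 : m' + 1 ≤ n := le_trans hmono.le_apply hc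
    exact Nat.findGreatest_is_greatest (P := fun t => N t ≤ n)
      (Nat.lt_succ_self m') h1 hc
  have hday : dayNorm (fun i => if i < n then xfun N i else 0) ≤
      1 - ((4:ℝ)⁻¹) ^ (m' + 1) / 4 := dayNorm_trunc_le hmono hlt.le
  have han : a n < ((8:ℝ)⁻¹) ^ (m' + 1) := haN m' n hm'spec
  have hq : (0:ℝ) < ((4:ℝ)⁻¹) ^ (m' + 1) / 4 := by positivity
  have hinv : (((8:ℝ) ^ (m' + 1))⁻¹)⁻¹ ≤ (a n)⁻¹ := by
    apply inv_anti₀ (hpos n)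
    rw [← inv_pow]
    exact han.le
  rw [inv_inv] at hinv
  have hstep : (2:ℝ) ^ (m' + 1) / 4 ≤
      (a n)⁻¹ * (1 - dayNorm fun i => if i < n then xfun N i else 0) := by
    have h1 : ((4:ℝ)⁻¹) ^ (m' + 1) / 4 ≤
        1 - dayNorm (fun i => if i < n then xfun N i else 0) := by linarith
    calc (2:ℝ) ^ (m' + 1) / 4 = (8:ℝ) ^ (m' + 1) * (((4:ℝ)⁻¹) ^ (m' + 1) / 4) := by
          rw [div_eq_mul_inv, div_eq_mul_inv, ← mul_assoc, ← mul_pow]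
          norm_num
      _ ≤ (a n)⁻¹ * (1 - dayNorm fun i => if i < n then xfun N i else 0) := by
          apply mul_le_mul hinv h1 (le_of_lt hq)
          exact inv_nonneg.mpr (hpos n).le
  have hfin : (2:ℝ) ^ (M + 1) ≤ (2:ℝ) ^ (m' + 1) :=
    pow_le_pow_right₀ (by norm_num) (by omega)
  linarith
end

section
/- For Day's norm on $c_0$: if $x\in c_0$ and $A_n(x)$ is a set of $n$ indices on which $|x|$ takes its $n$ largest values (i.e., $|x(j)|\ge |x(k)|$ for $j\in A_n(x)$, $k\notin A_n(x)$), then $\sup_{|A|\le n}\|P_A x\| = \|P_{A_n(x)} x\| = (\sum_{k=1}^n 2^{-k} x(j_k)^2)^{1/2}$, where $|x(j_1)|\ge|x(j_2)|\ge\cdots$ enumerates the values of $|x|$ on $A_n(x)$ in decreasing order. -/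
open Filter Topology

open Finset

lemma anti_sum (c : ℕ → ℝ) (hc : Antitone c) (T : Finset ℕ) :
    ∑ i ∈ T, c i ≤ ∑ i ∈ Finset.range T.card, c i := by
  classical
  have hsm : StrictMono (T.orderEmbOfFin rfl) := (T.orderEmbOfFin rfl).strictMono
  have hmono : ∀ i : Fin T.card, (i : ℕ) ≤ T.orderEmbOfFin rfl i := by
    intro ⟨m, hm⟩
    induction m with
    | zero => exact Nat.zero_le _
    | succ k ih =>
      have hk : k < T.card := Nat.lt_of_succ_lt hm
      have h1 := ih hk
      have h2 : T.orderEmbOfFin rfl ⟨k, hk⟩ < T.orderEmbOfFin rfl ⟨k+1, hm⟩ :=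
        hsm (by simp [Fin.lt_def])
      simp only [Fin.val_mk] at h1 ⊢
      omega
  have e1 : ∑ i ∈ T, c i = ∑ i : Fin T.card, c (T.orderEmbOfFin rfl i) := by
    rw [← Finset.sum_attach T c]
    exact (Equiv.sum_comp (T.orderIsoOfFin rfl).toEquiv (fun a => c a)).symm
  rw [e1, ← Fin.sum_univ_eq_sum_range]
  exact Finset.sum_le_sum fun i _ => hc (hmono i)

noncomputable def cfun (x : ℕ → ℝ) (n : ℕ) (j : Fin n → ℕ) (i : ℕ) : ℝ :=
  if h : i < n then x (j ⟨i, h⟩) ^ 2 else 0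

lemma cfun_nonneg (x : ℕ → ℝ) (n : ℕ) (j : Fin n → ℕ) (i : ℕ) : 0 ≤ cfun x n j i := by
  unfold cfun; split <;> positivity

lemma cfun_anti (x : ℕ → ℝ) (n : ℕ) (j : Fin n → ℕ)
    (hanti : Antitone fun i => |x (j i)|) : Antitone (cfun x n j) := by
  intro a b hab
  unfold cfun
  rcases lt_or_ge b n with hb | hb
  · have ha : a < n := lt_of_le_of_lt hab hb
    rw [dif_pos ha, dif_pos hb]
    have h := hanti (a := ⟨a, ha⟩) (b := ⟨b, hb⟩) (by exact hab)
    calc x (j ⟨b, hb⟩) ^ 2 = |x (j ⟨b, hb⟩)| ^ 2 := (sq_abs _).symm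
      _ ≤ |x (j ⟨a, ha⟩)| ^ 2 := by
          exact pow_le_pow_left₀ (abs_nonneg _) h 2
      _ = x (j ⟨a, ha⟩) ^ 2 := sq_abs _
  · rw [dif_neg (by omega)]
    exact cfun_nonneg x n j a

lemma maj (x : ℕ → ℝ) (n : ℕ) (A : Finset ℕ) (hcard : A.card = n)
    (hmax : ∀ j ∈ A, ∀ k ∉ A, |x k| ≤ |x j|)
    (j : Fin n → ℕ) (hinj : Function.Injective j) (hrange : ∀ i, j i ∈ A)
    (hanti : Antitone fun i => |x (j i)|)
    (U : Finset ℕ) (hU : U.card ≤ n) :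
    ∑ m ∈ U, x m ^ 2 ≤ ∑ i ∈ Finset.range U.card, cfun x n j i := by
  classical
  set c := cfun x n j with hc
  have canti := cfun_anti x n j hanti
  have cnn := cfun_nonneg x n j
  -- j is a bijection onto A
  have himg : Finset.image j Finset.univ = A := by
    apply Finset.eq_of_subset_of_card_le
    · intro m hm
      simp only [Finset.mem_image] at hm
      obtain ⟨i, _, rfl⟩ := hm
      exact hrange i
    · rw [Finset.card_image_of_injective _ hinj, Finset.card_univ, Fintype.card_fin, hcard]
  set U₁ := U ∩ A with hU₁
  set U₂ := U \ A with hU₂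
  set a := U₁.card with ha
  set u := U.card with hu
  have hcardsplit : a + U₂.card = u := Finset.card_inter_add_card_sdiff U A
  have hau : a ≤ u := by omega
  set I : Finset (Fin n) := Finset.univ.filter (fun i => j i ∈ U₁) with hI
  have hIU₁ : I.image j = U₁ := by
    apply Finset.eq_of_subset_of_card_le
    · intro m hm
      simp only [Finset.mem_image, hI, Finset.mem_filter] at hm
      obtain ⟨i, ⟨_, h2⟩, rfl⟩ := hm
      exact h2
    · rw [Finset.card_image_of_injective _ hinj]
      -- U₁.card ≤ I.card : every m ∈ U₁ is in A = image j
      have : U₁ ⊆ I.image j := by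
        intro m hm
        have hmA : m ∈ A := (Finset.mem_inter.mp hm).2
        rw [← himg] at hmA
        simp only [Finset.mem_image] at hmA
        obtain ⟨i, _, rfl⟩ := hmA
        exact Finset.mem_image.mpr ⟨i, Finset.mem_filter.mpr ⟨Finset.mem_univ _, hm⟩, rfl⟩
      calc U₁.card ≤ (I.image j).card := Finset.card_le_card this
        _ = I.card := Finset.card_image_of_injective _ hinj
  have hIcard : I.card = a := by
    rw [← hIU₁, Finset.card_image_of_injective _ hinj] at ha; omega
  -- sum over U₁
  have hsum1 : ∑ m ∈ U₁, x m ^ 2 ≤ ∑ i ∈ Finset.range a, c i := by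
    have e1 : ∑ m ∈ U₁, x m ^ 2 = ∑ i ∈ I.image Fin.val, c i := by
      rw [← hIU₁, Finset.sum_image (fun i _ i' _ h => hinj h),
        Finset.sum_image (fun i _ i' _ h => Fin.val_injective h)]
      refine Finset.sum_congr rfl fun i _ => ?_
      rw [hc]; unfold cfun
      rw [dif_pos i.isLt]
    have e2 : (I.image Fin.val).card = a := by
      rw [Finset.card_image_of_injective _ Fin.val_injective, hIcard]
    rw [e1, ← e2]
    exact anti_sum c canti _
  -- sum over U₂
  have hsum2 : ∑ m ∈ U₂, x m ^ 2 ≤ ∑ i ∈ Finset.Ico a u, c i := by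
    rcases Finset.eq_empty_or_nonempty U₂ with h | h
    · rw [h]; simp
      exact Finset.sum_nonneg fun i _ => cnn i
    · have hu1 : 1 ≤ u := by
        have := Finset.card_pos.mpr h
        omega
      have hun : u - 1 < n := by omega
      have hbound : ∀ m ∈ U₂, x m ^ 2 ≤ c (u - 1) := by
        intro m hm
        have hmA : m ∉ A := (Finset.mem_sdiff.mp hm).2
        have h1 : |x m| ≤ |x (j ⟨u - 1, hun⟩)| := hmax _ (hrange _) m hmA
        rw [hc]; unfold cfun
        rw [dif_pos hun]
        calc x m ^ 2 = |x m| ^ 2 := (sq_abs _).symm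
          _ ≤ |x (j ⟨u - 1, hun⟩)| ^ 2 := pow_le_pow_left₀ (abs_nonneg _) h1 2
          _ = _ := sq_abs _
      calc ∑ m ∈ U₂, x m ^ 2 ≤ ∑ _m ∈ U₂, c (u - 1) := Finset.sum_le_sum hbound
        _ = U₂.card * c (u - 1) := by rw [Finset.sum_const, nsmul_eq_mul]
        _ = ∑ _i ∈ Finset.Ico a u, c (u - 1) := by
            rw [Finset.sum_const, nsmul_eq_mul, Nat.card_Ico]
            congr 2
            omega
        _ ≤ ∑ i ∈ Finset.Ico a u, c i := by
            refine Finset.sum_le_sum fun i hi => ?_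
            have := Finset.mem_Ico.mp hi
            exact canti (by omega)
  calc ∑ m ∈ U, x m ^ 2 = ∑ m ∈ U₁, x m ^ 2 + ∑ m ∈ U₂, x m ^ 2 :=
        (Finset.sum_inter_add_sum_sdiff U A _).symm
    _ ≤ ∑ i ∈ Finset.range a, c i + ∑ i ∈ Finset.Ico a u, c i := add_le_add hsum1 hsum2
    _ = ∑ i ∈ Finset.range u, c i := by
        rw [Finset.range_eq_Ico, Finset.range_eq_Ico]
        exact Finset.sum_Ico_consecutive _ (Nat.zero_le a) hau


lemma tele (k M : ℕ) (hk : k ≤ M) : ∑ t ∈ Finset.Ico k M, (2:ℝ)⁻¹ ^ (t+2)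
    = (2:ℝ)⁻¹ ^ (k+1) - (2:ℝ)⁻¹ ^ (M+1) := by
  induction M with
  | zero => interval_cases k <;> simp
  | succ m ih =>
    rcases Nat.lt_or_ge k (m+1) with h | h
    · have hkm : k ≤ m := Nat.lt_succ_iff.mp h
      rw [Finset.sum_Ico_succ_top hkm, ih hkm]; ring
    · have hkm : k = m+1 := le_antisymm hk h
      subst hkm; simp

lemma abel_id (f : ℕ → ℝ) (u : Finset ℕ) (M : ℕ) (hu : u ⊆ Finset.range M) :
    ∑ k ∈ u, (2:ℝ)⁻¹ ^ (k+1) * f k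
      = ∑ t ∈ Finset.range M, (2:ℝ)⁻¹ ^ (t+2) * (∑ k ∈ u.filter (· ≤ t), f k)
        + (2:ℝ)⁻¹ ^ (M+1) * ∑ k ∈ u, f k := by
  have step1 : ∑ k ∈ u, (2:ℝ)⁻¹ ^ (k+1) * f k
      = ∑ k ∈ u, ((∑ t ∈ Finset.Ico k M, (2:ℝ)⁻¹ ^ (t+2) * f k) + (2:ℝ)⁻¹ ^ (M+1) * f k) := by
    refine Finset.sum_congr rfl fun k hk => ?_
    rw [← Finset.sum_mul, tele k M (Finset.mem_range.mp (hu hk)).le]; ring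
  rw [step1, Finset.sum_add_distrib, ← Finset.mul_sum]
  congr 1
  have h1 : ∀ k ∈ u, ∑ t ∈ Finset.Ico k M, (2:ℝ)⁻¹ ^ (t+2) * f k
      = ∑ t ∈ Finset.range M, if k ≤ t then (2:ℝ)⁻¹ ^ (t+2) * f k else 0 := by
    intro k hk
    rw [← Finset.sum_filter]
    congr 1
    ext t; simp [Finset.mem_Ico, Finset.mem_filter, Finset.mem_range, and_comm]
  rw [Finset.sum_congr rfl h1, Finset.sum_comm]
  refine Finset.sum_congr rfl fun t ht => ?_
  rw [Finset.mul_sum, Finset.sum_filter]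

lemma core (n : ℕ) (c : ℕ → ℝ) (hc : Antitone c) (hc0 : ∀ i, n ≤ i → c i = 0)
    (s : Finset ℕ) (d : ℕ → ℝ)
    (hmaj : ∀ T ⊆ s, ∑ k ∈ T, d k ≤ ∑ i ∈ Finset.range T.card, c i) :
    ∑ k ∈ s, (2:ℝ)⁻¹ ^ (k+1) * d k ≤ ∑ i ∈ Finset.range n, (2:ℝ)⁻¹ ^ (i+1) * c i := by
  have hcnn : ∀ i, 0 ≤ c i := by
    intro i
    rcases le_or_gt n i with h | h
    · rw [hc0 i h]
    · have h2 := hc h.le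
      rw [hc0 n le_rfl] at h2; exact h2
  set M := n + s.sup id + 1 with hM
  have hsub : s ⊆ Finset.range M := by
    intro k hk
    have := Finset.le_sup (f := id) hk
    simp only [id] at this
    exact Finset.mem_range.mpr (by omega)
  have hnM : n ≤ M := by omega
  have hrhs : ∑ i ∈ Finset.range n, (2:ℝ)⁻¹ ^ (i+1) * c i
      = ∑ i ∈ Finset.range M, (2:ℝ)⁻¹ ^ (i+1) * c i := by
    refine (Finset.sum_subset (Finset.range_subset_range.mpr hnM) fun i _ hi => ?_)
    rw [hc0 i (by simpa using Nat.le_of_not_lt (by simpa using hi))]; ring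
  rw [hrhs, abel_id d s M hsub, abel_id c (Finset.range M) M subset_rfl]
  have hsum_mono : ∀ m m' : ℕ, m ≤ m' → ∑ i ∈ Finset.range m, c i ≤ ∑ i ∈ Finset.range m', c i :=
    fun m m' h => Finset.sum_le_sum_of_subset_of_nonneg (Finset.range_subset_range.mpr h)
      (fun i _ _ => hcnn i)
  refine add_le_add (Finset.sum_le_sum fun t ht => ?_) ?_
  · refine mul_le_mul_of_nonneg_left ?_ (by positivity)
    -- ∑ k ∈ s.filter (· ≤ t), d k ≤ ∑ i ∈ (range M).filter (· ≤ t), c i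
    have h1 := hmaj (s.filter (· ≤ t)) (Finset.filter_subset _ _)
    have hcard : (s.filter (· ≤ t)).card ≤ t + 1 := by
      have : s.filter (· ≤ t) ⊆ Finset.Iic t := fun k hk => by
        simp only [Finset.mem_filter] at hk; exact Finset.mem_Iic.mpr hk.2
      simpa using Finset.card_le_card this
    have h2 : (Finset.range M).filter (· ≤ t) = Finset.range (t+1) := by
      ext i
      simp only [Finset.mem_filter, Finset.mem_range, Nat.lt_succ_iff]
      have := Finset.mem_range.mp ht
      omega
    rw [h2]
    exact h1.trans (hsum_mono _ _ hcard)
  · refine mul_le_mul_of_nonneg_left ?_ (by positivity)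
    have h1 := hmaj s subset_rfl
    have hcard : s.card ≤ M := by simpa using Finset.card_le_card hsub
    calc ∑ k ∈ s, d k ≤ ∑ i ∈ Finset.range s.card, c i := h1
      _ ≤ ∑ i ∈ Finset.range M, c i := hsum_mono _ _ hcard


lemma tsum_bound (x : ℕ → ℝ) (n : ℕ) (A : Finset ℕ) (hcard : A.card = n)
    (hmax : ∀ j ∈ A, ∀ k ∉ A, |x k| ≤ |x j|)
    (j : Fin n → ℕ) (hinj : Function.Injective j) (hrange : ∀ i, j i ∈ A)
    (hanti : Antitone fun i => |x (j i)|)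
    (B : Finset ℕ) (hB : B.card ≤ n) (J : ℕ → ℕ) (hJ : Function.Injective J) :
    ∑' k, (2:ℝ)⁻¹ ^ (k+1) * (if J k ∈ B then x (J k) else 0) ^ 2
      ≤ ∑ i ∈ Finset.range n, (2:ℝ)⁻¹ ^ (i+1) * cfun x n j i := by
  classical
  set s : Finset ℕ := B.preimage J (hJ.injOn) with hs
  have hmem : ∀ k, k ∈ s ↔ J k ∈ B := fun k => Finset.mem_preimage
  have hzero : ∀ k ∉ s, (2:ℝ)⁻¹ ^ (k+1) * (if J k ∈ B then x (J k) else 0) ^ 2 = 0 := by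
    intro k hk
    rw [if_neg (fun h => hk ((hmem k).mpr h))]
    ring
  rw [tsum_eq_sum hzero]
  have heq : ∀ k ∈ s, (2:ℝ)⁻¹ ^ (k+1) * (if J k ∈ B then x (J k) else 0) ^ 2
      = (2:ℝ)⁻¹ ^ (k+1) * (x (J k) ^ 2) := by
    intro k hk
    rw [if_pos ((hmem k).mp hk)]
  rw [Finset.sum_congr rfl heq]
  refine core n _ (cfun_anti x n j hanti) (fun i hi => dif_neg (by omega)) s _ ?_
  intro T hT
  have himg : ∀ m ∈ T.image J, m ∈ B := by
    intro m hm
    obtain ⟨k, hk, rfl⟩ := Finset.mem_image.mp hm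
    exact (hmem k).mp (hT hk)
  have hcardT : (T.image J).card = T.card := Finset.card_image_of_injective _ hJ
  have hTn : (T.image J).card ≤ n :=
    le_trans (Finset.card_le_card himg) hB
  have := maj x n A hcard hmax j hinj hrange hanti (T.image J) hTn
  rw [hcardT] at this
  calc ∑ k ∈ T, x (J k) ^ 2 = ∑ m ∈ T.image J, x m ^ 2 :=
        by rw [Finset.sum_image (fun a _ b _ h => hJ h)]
    _ ≤ _ := this

lemma tsum_attain (x : ℕ → ℝ) (n : ℕ) (A : Finset ℕ) (hcard : A.card = n)
    (j : Fin n → ℕ) (hinj : Function.Injective j) (hrange : ∀ i, j i ∈ A) :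
    ∃ J : ℕ → ℕ, Function.Injective J ∧
    ∑' k, (2:ℝ)⁻¹ ^ (k+1) * (if J k ∈ A then x (J k) else 0) ^ 2
      = ∑ i ∈ Finset.range n, (2:ℝ)⁻¹ ^ (i+1) * cfun x n j i := by
  classical
  have hinf : {m | m ∉ A}.Infinite := by
    have := A.finite_toSet.infinite_compl
    simpa [Set.compl_def] using this
  set e : ℕ → ℕ := Nat.nth (fun m => m ∉ A) with he
  have hemem : ∀ k, e k ∉ A := fun k => Nat.nth_mem_of_infinite hinf k
  have heinj : Function.Injective e := Nat.nth_injective hinf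
  refine ⟨fun k => if h : k < n then j ⟨k, h⟩ else e (k - n), ?_, ?_⟩
  · intro k1 k2 h
    dsimp only at h
    by_cases h1 : k1 < n <;> by_cases h2 : k2 < n
    · rw [dif_pos h1, dif_pos h2] at h
      have := hinj h
      simpa using congrArg Fin.val this
    · rw [dif_pos h1, dif_neg h2] at h
      exact absurd (h ▸ hrange ⟨k1, h1⟩) (hemem (k2 - n))
    · rw [dif_neg h1, dif_pos h2] at h
      exact absurd (h.symm ▸ hrange ⟨k2, h2⟩) (hemem (k1 - n))
    · rw [dif_neg h1, dif_neg h2] at h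
      have := heinj h
      omega
  · have hzero : ∀ k ∉ Finset.range n,
        (2:ℝ)⁻¹ ^ (k+1) * (if (if h : k < n then j ⟨k, h⟩ else e (k - n)) ∈ A
          then x (if h : k < n then j ⟨k, h⟩ else e (k - n)) else 0) ^ 2 = 0 := by
      intro k hk
      have hkn : ¬ k < n := by simpa using hk
      rw [dif_neg hkn, if_neg (hemem (k - n))]
      ring
    rw [tsum_eq_sum hzero]
    refine Finset.sum_congr rfl fun k hk => ?_
    have hkn : k < n := Finset.mem_range.mp hk
    rw [dif_pos hkn, if_pos (hrange _)]
    unfold cfun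
    rw [dif_pos hkn]



theorem stmt14 (x : ℕ → ℝ) (hx : Tendsto x atTop (𝓝 0)) (n : ℕ)
    (A : Finset ℕ) (hcard : A.card = n)
    (hmax : ∀ j ∈ A, ∀ k ∉ A, |x k| ≤ |x j|)
    (j : Fin n → ℕ) (hinj : Function.Injective j) (hrange : ∀ i, j i ∈ A)
    (hanti : Antitone fun i => |x (j i)|) :
    (⨆ B : {B : Finset ℕ // B.card ≤ n},
        dayNorm (fun i => if i ∈ B.1 then x i else 0))
      = dayNorm (fun i => if i ∈ A then x i else 0) ∧
    dayNorm (fun i => if i ∈ A then x i else 0)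
      = Real.sqrt (∑ i : Fin n, ((2:ℝ)⁻¹) ^ ((i : ℕ) + 1) * x (j i) ^ 2) := by
  classical
  set t₀ : ℝ := ∑ i ∈ Finset.range n, (2:ℝ)⁻¹ ^ (i+1) * cfun x n j i with ht₀
  set r₀ : ℝ := Real.sqrt t₀ with hr₀
  have hfin : Real.sqrt (∑ i : Fin n, ((2:ℝ)⁻¹) ^ ((i : ℕ) + 1) * x (j i) ^ 2) = r₀ := by
    rw [hr₀, ht₀]
    congr 1
    rw [← Fin.sum_univ_eq_sum_range (fun i => (2:ℝ)⁻¹ ^ (i+1) * cfun x n j i) n]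
    refine Finset.sum_congr rfl fun i _ => ?_
    unfold cfun
    rw [dif_pos i.isLt]
  have hd_le : ∀ (B : Finset ℕ), B.card ≤ n →
      dayNorm (fun i => if i ∈ B then x i else 0) ≤ r₀ := by
    intro B hB
    refine Real.sSup_le ?_ (Real.sqrt_nonneg _)
    rintro r ⟨J, hJ, rfl⟩
    exact Real.sqrt_le_sqrt (tsum_bound x n A hcard hmax j hinj hrange hanti B hB J hJ)
  have hA_eq : dayNorm (fun i => if i ∈ A then x i else 0) = r₀ := by
    refine le_antisymm (hd_le A (le_of_eq hcard)) ?_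
    obtain ⟨J, hJ, hJeq⟩ := tsum_attain x n A hcard j hinj hrange
    have hbdd : BddAbove {r : ℝ | ∃ J : ℕ → ℕ, Function.Injective J ∧
        r = Real.sqrt (∑' k, ((2:ℝ)⁻¹) ^ (k + 1)
          * ((fun i => if i ∈ A then x i else 0) (J k)) ^ 2)} := by
      refine ⟨r₀, ?_⟩
      rintro r ⟨J', hJ', rfl⟩
      exact Real.sqrt_le_sqrt (tsum_bound x n A hcard hmax j hinj hrange hanti A
        (le_of_eq hcard) J' hJ')
    refine le_csSup hbdd ⟨J, hJ, ?_⟩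
    exact congrArg Real.sqrt hJeq.symm
  haveI : Nonempty {B : Finset ℕ // B.card ≤ n} := ⟨⟨∅, by simp⟩⟩
  have hbdd2 : BddAbove (Set.range fun B : {B : Finset ℕ // B.card ≤ n} =>
      dayNorm fun i => if i ∈ B.1 then x i else 0) := by
    refine ⟨r₀, ?_⟩
    rintro r ⟨B, rfl⟩
    exact hd_le B.1 B.2
  constructor
  · refine le_antisymm ?_ ?_
    · rw [hA_eq]
      exact ciSup_le fun B => hd_le B.1 B.2
    · exact le_ciSup hbdd2 ⟨A, le_of_eq hcard⟩
  · rw [hA_eq]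
    exact hfin.symm
end

section
/- In the Nakano-type symmetric space setting: let $(p_n)$ be a non-decreasing sequence with $p_1\ge 1$ and $p_n\to\infty$, and let $\phi(x) = \sup\{\sum_{k=1}^\infty |x(\gamma_k)|^{p_k}\}$ over sequences of distinct points of $\Gamma$, with Luxemburg norm $\|x\| = \inf\{\rho>0: \phi(x/\rho)\le 1\}$. Let $x$ with $\|x\|=1$, let $(\gamma_j)$ enumerate $\mathrm{supp}(x)$ with $|x(\gamma_1)|\ge|x(\gamma_2)|\ge\cdots$, and set $A_n = \{\gamma_1,\dots,\gamma_n\}$, $R_{A_n}x = x - P_{A_n}x$. If $\|R_{A_n}x\| \le 1$, then $\sum_{j=n+1}^\infty |x(\gamma_j)|^{p_j} \le \|R_{A_n}x\|^{p_n}$. -/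
noncomputable def nakPhi {Γ : Type*} (p : ℕ → ℝ) (x : Γ → ℝ) : ENNReal :=
  ⨆ j : {j : ℕ → Γ // Function.Injective j},
    ∑' k, ENNReal.ofReal (|x (j.1 k)| ^ p k)

noncomputable def nakNorm {Γ : Type*} (p : ℕ → ℝ) (x : Γ → ℝ) : ℝ :=
  sInf {ρ : ℝ | 0 < ρ ∧ nakPhi p (fun g => x g / ρ) ≤ 1}

lemma nakPhi_mono {Γ : Type*} (p : ℕ → ℝ) (hpp : ∀ k, 0 ≤ p k) {y z : Γ → ℝ}
    (h : ∀ g, |y g| ≤ |z g|) : nakPhi p y ≤ nakPhi p z := by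
  refine iSup_mono fun j => ENNReal.tsum_le_tsum fun k => ENNReal.ofReal_le_ofReal ?_
  exact Real.rpow_le_rpow (abs_nonneg _) (h _) (hpp k)

theorem stmt17 {Γ : Type*} [DecidableEq Γ] (p : ℕ → ℝ) (hp : Monotone p)
    (hp1 : 1 ≤ p 0)
    (x : Γ → ℝ) (hx : nakNorm p x = 1)
    (γs : ℕ → Γ) (hinj : Function.Injective γs)
    (hsupp : Set.range γs = {g | x g ≠ 0})
    (hanti : Antitone fun k => |x (γs k)|) (n : ℕ)
    (hR : nakNorm p (fun g => if g ∈ (Finset.range n).image γs then 0 else x g) ≤ 1) :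
    (∑' k : ℕ, ENNReal.ofReal (|x (γs (n + k))| ^ p (n + k))) ≤
      ENNReal.ofReal
        ((nakNorm p fun g => if g ∈ (Finset.range n).image γs then 0 else x g)
          ^ p n) := by
  set R : Γ → ℝ := fun g => if g ∈ (Finset.range n).image γs then 0 else x g with hRdef
  set S : Set ℝ := {ρ : ℝ | 0 < ρ ∧ nakPhi p (fun g => R g / ρ) ≤ 1} with hSdef
  have hpk : ∀ k, 1 ≤ p k := fun k => le_trans hp1 (hp (Nat.zero_le k))
  have hpk0 : ∀ k, 0 < p k := fun k => lt_of_lt_of_le one_pos (hpk k)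
  have hRval : ∀ k, R (γs (n + k)) = x (γs (n + k)) := by
    intro k
    simp only [hRdef]
    rw [if_neg]
    intro h
    simp only [Finset.mem_image, Finset.mem_range] at h
    obtain ⟨i, hi, hieq⟩ := h
    have := hinj hieq
    omega
  have hRle : ∀ g, |R g| ≤ |x g| := by
    intro g
    simp only [hRdef]
    split_ifs with h
    · simp
    · exact le_rfl
  -- S is nonempty
  have hSne : S.Nonempty := by
    have hx' : Set.Nonempty {ρ : ℝ | 0 < ρ ∧ nakPhi p (fun g => x g / ρ) ≤ 1} := by
      by_contra h
      rw [Set.not_nonempty_iff_eq_empty] at h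
      rw [nakNorm, h, Real.sInf_empty] at hx
      norm_num at hx
    obtain ⟨ρ, hρ0, hρ⟩ := hx'
    refine ⟨ρ, hρ0, le_trans (nakPhi_mono p (fun k => (hpk0 k).le) fun g => ?_) hρ⟩
    rw [abs_div, abs_div]
    exact div_le_div_of_nonneg_right (hRle g) (abs_nonneg ρ)
  set r := nakNorm p R with hrdef
  have hSinf : r = sInf S := rfl
  have hr0 : 0 ≤ r := by
    rw [hSinf]
    exact Real.sInf_nonneg (fun ρ hρ => hρ.1.le)
  -- key finite-sum bound for each ρ ∈ S
  have key : ∀ F : Finset ℕ, ∀ ρ ∈ S,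
      (∑ k ∈ F, |x (γs (n + k))| ^ p (n + k)) ≤
        max (ρ ^ p n) (ρ ^ p (n + F.sup id)) := by
    intro F ρ hρ
    obtain ⟨hρ0, hφ⟩ := hρ
    set m := n + F.sup id with hm
    have hj : Function.Injective (fun k => γs (n + k)) := by
      intro a b h
      have := hinj h
      omega
    have h1 : (∑' k, ENNReal.ofReal (|R (γs (n + k)) / ρ| ^ p k)) ≤ 1 :=
      le_trans (le_iSup (fun j : {j : ℕ → Γ // Function.Injective j} =>
        ∑' k, ENNReal.ofReal (|R (j.1 k) / ρ| ^ p k)) ⟨_, hj⟩) hφ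
    set b : ℕ → ℝ := fun k => |x (γs (n + k))| / ρ with hbdef
    have hb0 : ∀ k, 0 ≤ b k := fun k => div_nonneg (abs_nonneg _) hρ0.le
    have habs : ∀ k, |R (γs (n + k)) / ρ| = b k := by
      intro k
      rw [hRval k, abs_div, abs_of_pos hρ0]
    have h1' : (∑' k, ENNReal.ofReal (b k ^ p k)) ≤ 1 := by
      refine le_trans (le_of_eq ?_) h1
      exact tsum_congr fun k => by rw [habs k]
    have hble : ∀ k, b k ≤ 1 := by
      intro k
      by_contra h
      push_neg at h
      have h2 : (1 : ℝ) < b k ^ p k := by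
        calc (1 : ℝ) = 1 ^ p k := (Real.one_rpow _).symm
        _ < b k ^ p k := Real.rpow_lt_rpow zero_le_one h (hpk0 k)
      have hterm : ENNReal.ofReal (b k ^ p k) ≤ 1 := le_trans (ENNReal.le_tsum k) h1'
      rw [ENNReal.ofReal_le_one] at hterm
      linarith
    have h2 : (∑ k ∈ F, b k ^ p k) ≤ 1 := by
      have h3 : (∑ k ∈ F, ENNReal.ofReal (b k ^ p k)) ≤ 1 :=
        le_trans (ENNReal.sum_le_tsum F) h1'
      rw [← ENNReal.ofReal_sum_of_nonneg
        (fun k _ => Real.rpow_nonneg (hb0 k) _), ENNReal.ofReal_le_one] at h3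
      exact h3
    have hMnn : 0 ≤ max (ρ ^ p n) (ρ ^ p m) :=
      le_trans (Real.rpow_nonneg hρ0.le _) (le_max_left _ _)
    have h3 : ∀ k ∈ F, |x (γs (n + k))| ^ p (n + k) ≤
        max (ρ ^ p n) (ρ ^ p m) * b k ^ p k := by
      intro k hk
      have hxk : |x (γs (n + k))| = ρ * b k := by
        rw [hbdef]
        field_simp
      rw [hxk, Real.mul_rpow hρ0.le (hb0 k)]
      have hkm : n + k ≤ m := by
        have : k ≤ F.sup id := Finset.le_sup (f := id) hk
        omega
      have hA : ρ ^ p (n + k) ≤ max (ρ ^ p n) (ρ ^ p m) := by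
        rcases le_or_gt ρ 1 with h | h
        · exact le_max_of_le_left
            (Real.rpow_le_rpow_of_exponent_ge hρ0 h (hp (Nat.le_add_right n k)))
        · exact le_max_of_le_right (Real.rpow_le_rpow_of_exponent_le h.le (hp hkm))
      have hB : b k ^ p (n + k) ≤ b k ^ p k := by
        rcases eq_or_lt_of_le (hb0 k) with h0 | h0
        · rw [← h0, Real.zero_rpow (ne_of_gt (hpk0 _)), Real.zero_rpow (ne_of_gt (hpk0 _))]
        · exact Real.rpow_le_rpow_of_exponent_ge h0 (hble k) (hp (Nat.le_add_left k n))
      exact mul_le_mul hA hB (Real.rpow_nonneg (hb0 k) _) hMnn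
    calc (∑ k ∈ F, |x (γs (n + k))| ^ p (n + k))
        ≤ ∑ k ∈ F, max (ρ ^ p n) (ρ ^ p m) * b k ^ p k := Finset.sum_le_sum h3
      _ = max (ρ ^ p n) (ρ ^ p m) * ∑ k ∈ F, b k ^ p k := by rw [Finset.mul_sum]
      _ ≤ max (ρ ^ p n) (ρ ^ p m) * 1 := by
          exact mul_le_mul_of_nonneg_left h2 hMnn
      _ = max (ρ ^ p n) (ρ ^ p m) := mul_one _
  -- pass to the infimum
  have hclaim : ∀ F : Finset ℕ, (∑ k ∈ F, |x (γs (n + k))| ^ p (n + k)) ≤ r ^ p n := by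
    intro F
    set m := n + F.sup id with hm
    set c := ∑ k ∈ F, |x (γs (n + k))| ^ p (n + k) with hc
    have hcont : Continuous fun ρ : ℝ => max (ρ ^ p n) (ρ ^ p m) := by
      apply Continuous.max <;>
        exact continuous_iff_continuousAt.mpr fun ρ =>
          Real.continuousAt_rpow_const ρ _ (Or.inr (hpk0 _).le)
    have hclosed : IsClosed {ρ : ℝ | c ≤ max (ρ ^ p n) (ρ ^ p m)} :=
      isClosed_le continuous_const hcont
    have hsub : S ⊆ {ρ : ℝ | c ≤ max (ρ ^ p n) (ρ ^ p m)} := fun ρ hρ => key F ρ hρ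
    have hrmem : r ∈ closure S := by
      rw [hSinf]
      exact csInf_mem_closure hSne ⟨0, fun ρ hρ => hρ.1.le⟩
    have hcr : c ≤ max (r ^ p n) (r ^ p m) :=
      closure_minimal hsub hclosed hrmem
    have hmax : r ^ p m ≤ r ^ p n := by
      rcases eq_or_lt_of_le hr0 with h0 | h0
      · rw [← h0, Real.zero_rpow (ne_of_gt (hpk0 _)), Real.zero_rpow (ne_of_gt (hpk0 _))]
      · exact Real.rpow_le_rpow_of_exponent_ge h0 hR (hp (Nat.le_add_right n _))
    calc c ≤ max (r ^ p n) (r ^ p m) := hcr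
      _ = r ^ p n := max_eq_left hmax
  rw [ENNReal.tsum_eq_iSup_sum]
  refine iSup_le fun F => ?_
  rw [← ENNReal.ofReal_sum_of_nonneg (fun k _ => Real.rpow_nonneg (abs_nonneg _) _)]
  exact ENNReal.ofReal_le_ofReal (hclaim F)
end

section
/- There exists an equivalent norm $\|\cdot\|$ on $c_0$ with respect to which the standard basis is normalized and 1-unconditional (and $\|x\|_\infty \le \|x\| \le 2\|x\|_\infty$), such that for every sequence $(a_n)$ of positive reals tending to $0$ there exists $x \in c_0$ with $\lim_{n\to\infty} a_n^{-1}(\|x\| - \sup_{|A|\le n}\|P_A x\|) = \infty$, where the supremum runs over subsets $A\subseteq\mathbb{N}$ of cardinality at most $n$ and $P_A$ is the coordinate projection. -/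
open Filter Topology Finset

noncomputable section

noncomputable section

/-- weight function: takes value 1/(r+2) at infinitely many positions -/
def qf (n : ℕ) : ℝ := ((n.unpair.1 : ℝ) + 2)⁻¹

lemma qf_pos (n : ℕ) : 0 < qf n := by
  unfold qf; positivity

lemma qf_le_half (n : ℕ) : qf n ≤ 1/2 := by
  unfold qf
  rw [inv_le_comm₀ (by positivity) (by norm_num)]
  norm_num

lemma qf_pair (r j : ℕ) : qf (Nat.pair r j) = ((r:ℝ)+2)⁻¹ := by
  simp [qf, Nat.unpair_pair]

/-- admissible finite sets -/
def Adm : Type := {L : Finset ℕ // ∑ i ∈ L, qf i ≤ 1}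

instance : Nonempty Adm := ⟨⟨∅, by simp⟩⟩

/-- The norm -/
def NN (x : ℕ → ℝ) : ℝ := max (⨆ i, |x i|) (2 * ⨆ L : Adm, ∑ i ∈ L.1, qf i * |x i|)

lemma sum_qf_abs_le {x : ℕ → ℝ} {C : ℝ} (hC : 0 ≤ C) (hx : ∀ i, |x i| ≤ C) (L : Adm) :
    ∑ i ∈ L.1, qf i * |x i| ≤ C := by
  calc ∑ i ∈ L.1, qf i * |x i| ≤ ∑ i ∈ L.1, qf i * C := by
        apply Finset.sum_le_sum
        intro i _
        exact mul_le_mul_of_nonneg_left (hx i) (qf_pos i).le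
    _ = (∑ i ∈ L.1, qf i) * C := by rw [Finset.sum_mul]
    _ ≤ 1 * C := mul_le_mul_of_nonneg_right L.2 hC
    _ = C := one_mul C

lemma bddAbove_sumA {x : ℕ → ℝ} {C : ℝ} (hC : 0 ≤ C) (hx : ∀ i, |x i| ≤ C) :
    BddAbove (Set.range fun L : Adm => ∑ i ∈ L.1, qf i * |x i|) := by
  refine ⟨C, ?_⟩
  rintro _ ⟨L, rfl⟩
  exact sum_qf_abs_le hC hx L

lemma supA_nonneg {x : ℕ → ℝ} : 0 ≤ ⨆ L : Adm, ∑ i ∈ L.1, qf i * |x i| := by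
  rcases isEmpty_or_nonempty Adm with h | h
  · simp [iSup_of_empty']
  by_cases hb : BddAbove (Set.range fun L : Adm => ∑ i ∈ L.1, qf i * |x i|)
  · refine le_trans ?_ (le_ciSup hb ⟨∅, by simp⟩)
    simp
  · rw [Real.iSup_of_not_bddAbove hb]

lemma bdd_of_tendsto {x : ℕ → ℝ} (hx : Tendsto x atTop (𝓝 0)) :
    ∃ C, 0 ≤ C ∧ ∀ i, |x i| ≤ C := by
  have h : Tendsto (fun i => |x i|) atTop (𝓝 0) := by
    have := hx.abs; simpa using this
  obtain ⟨C, hC⟩ := h.bddAbove_range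
  refine ⟨C, le_trans (abs_nonneg (x 0)) (hC ⟨0, rfl⟩), fun i => hC ⟨i, rfl⟩⟩

lemma bddAbove_abs {x : ℕ → ℝ} {C : ℝ} (hx : ∀ i, |x i| ≤ C) :
    BddAbove (Set.range fun i => |x i|) := by
  refine ⟨C, ?_⟩; rintro _ ⟨i, rfl⟩; exact hx i

lemma sup_abs_nonneg {x : ℕ → ℝ} : 0 ≤ ⨆ i, |x i| := by
  by_cases hb : BddAbove (Set.range fun i => |x i|)
  · exact le_trans (abs_nonneg (x 0)) (le_ciSup hb 0)
  · rw [Real.iSup_of_not_bddAbove hb]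

lemma sup_abs_le {x : ℕ → ℝ} {C : ℝ} (hC : 0 ≤ C) (hx : ∀ i, |x i| ≤ C) :
    (⨆ i, |x i|) ≤ C := Real.iSup_le hx hC

lemma NN_nonneg (x : ℕ → ℝ) : 0 ≤ NN x :=
  le_trans sup_abs_nonneg (le_max_left _ _)

lemma sup_abs_le_NN (x : ℕ → ℝ) : (⨆ i, |x i|) ≤ NN x := le_max_left _ _

lemma sumA_le_NN {x : ℕ → ℝ} (L : Adm) {C : ℝ} (hC : 0 ≤ C) (hx : ∀ i, |x i| ≤ C) :
    2 * ∑ i ∈ L.1, qf i * |x i| ≤ NN x := by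
  refine le_trans ?_ (le_max_right _ _)
  have := le_ciSup (bddAbove_sumA hC hx) L
  linarith


-- Property 1: subadditivity
lemma NN_add {x y : ℕ → ℝ} (hx : Tendsto x atTop (𝓝 0)) (hy : Tendsto y atTop (𝓝 0)) :
    NN (x + y) ≤ NN x + NN y := by
  obtain ⟨C, hC0, hC⟩ := bdd_of_tendsto hx
  obtain ⟨D, hD0, hD⟩ := bdd_of_tendsto hy
  have hNN : 0 ≤ NN x + NN y := add_nonneg (NN_nonneg x) (NN_nonneg y)
  apply max_le
  · apply Real.iSup_le _ hNN
    intro i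
    calc |(x + y) i| ≤ |x i| + |y i| := abs_add_le _ _
      _ ≤ (⨆ i, |x i|) + ⨆ i, |y i| :=
          add_le_add (le_ciSup (bddAbove_abs hC) i) (le_ciSup (bddAbove_abs hD) i)
      _ ≤ NN x + NN y := add_le_add (sup_abs_le_NN x) (sup_abs_le_NN y)
  · rw [show (2:ℝ) * (⨆ L : Adm, ∑ i ∈ L.1, qf i * |(x+y) i|)
        = ⨆ L : Adm, 2 * ∑ i ∈ L.1, qf i * |(x+y) i| from
        Real.mul_iSup_of_nonneg (by norm_num) _]
    apply Real.iSup_le _ hNN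
    intro L
    calc 2 * ∑ i ∈ L.1, qf i * |(x+y) i|
        ≤ 2 * ∑ i ∈ L.1, (qf i * |x i| + qf i * |y i|) := by
          apply mul_le_mul_of_nonneg_left _ (by norm_num)
          apply Finset.sum_le_sum
          intro i _
          rw [← mul_add]
          exact mul_le_mul_of_nonneg_left (abs_add_le _ _) (qf_pos i).le
      _ = 2 * ∑ i ∈ L.1, qf i * |x i| + 2 * ∑ i ∈ L.1, qf i * |y i| := by
          rw [Finset.sum_add_distrib]; ring
      _ ≤ NN x + NN y := add_le_add (sumA_le_NN L hC0 hC) (sumA_le_NN L hD0 hD)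

-- Property 2: homogeneity
lemma NN_smul (c : ℝ) (x : ℕ → ℝ) : NN (c • x) = |c| * NN x := by
  unfold NN
  have h1 : (⨆ i, |(c • x) i|) = |c| * ⨆ i, |x i| := by
    rw [Real.mul_iSup_of_nonneg (abs_nonneg c)]
    congr 1; funext i
    simp [abs_mul]
  have h2 : (⨆ L : Adm, ∑ i ∈ L.1, qf i * |(c • x) i|)
      = |c| * ⨆ L : Adm, ∑ i ∈ L.1, qf i * |x i| := by
    rw [Real.mul_iSup_of_nonneg (abs_nonneg c)]
    congr 1; funext L
    rw [Finset.mul_sum]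
    congr 1; funext i
    simp [abs_mul]; ring
  rw [h1, h2, show 2 * (|c| * ⨆ L : Adm, ∑ i ∈ L.1, qf i * |x i|)
      = |c| * (2 * ⨆ L : Adm, ∑ i ∈ L.1, qf i * |x i|) by ring]
  rw [← mul_max_of_nonneg _ _ (abs_nonneg c)]

-- Property 3
lemma NN_bounds {x : ℕ → ℝ} (hx : Tendsto x atTop (𝓝 0)) :
    (⨆ i, |x i|) ≤ NN x ∧ NN x ≤ 2 * ⨆ i, |x i| := by
  obtain ⟨C, hC0, hC⟩ := bdd_of_tendsto hx
  refine ⟨le_max_left _ _, ?_⟩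
  apply max_le
  · nlinarith [sup_abs_nonneg (x := x)]
  · apply mul_le_mul_of_nonneg_left _ (by norm_num)
    apply Real.iSup_le _ sup_abs_nonneg
    intro L
    apply sum_qf_abs_le sup_abs_nonneg
    intro i
    exact le_ciSup (bddAbove_abs hC) i

-- Property 4
lemma NN_single (n : ℕ) : NN (Pi.single n 1) = 1 := by
  have habs : ∀ i, |(Pi.single n 1 : ℕ → ℝ) i| = if i = n then 1 else 0 := by
    intro i
    by_cases h : i = n
    · subst h; simp
    · rw [Pi.single_eq_of_ne h]; simp [h]
  have h1 : (⨆ i, |(Pi.single n 1 : ℕ → ℝ) i|) = 1 := by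
    apply le_antisymm
    · apply Real.iSup_le _ (by norm_num)
      intro i; rw [habs]; split <;> norm_num
    · have hb : BddAbove (Set.range fun i => |(Pi.single n 1 : ℕ → ℝ) i|) := by
        refine ⟨1, ?_⟩; rintro _ ⟨i, rfl⟩
        simp only []
        rw [habs]; split <;> norm_num
      have := le_ciSup hb n
      rw [habs] at this; simpa using this
  have h2 : (⨆ L : Adm, ∑ i ∈ L.1, qf i * |(Pi.single n 1 : ℕ → ℝ) i|) ≤ 1/2 := by
    apply Real.iSup_le _ (by norm_num)
    intro L
    have : ∑ i ∈ L.1, qf i * |(Pi.single n 1 : ℕ → ℝ) i|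
        = ∑ i ∈ L.1, if i = n then qf i else 0 := by
      congr 1; funext i; rw [habs]; split <;> simp
    rw [this, Finset.sum_ite_eq' L.1 n qf]
    split
    · exact qf_le_half n
    · norm_num
  unfold NN
  rw [h1]
  rw [max_eq_left]
  have := supA_nonneg (x := (Pi.single n 1 : ℕ → ℝ))
  linarith

-- Property 5
lemma NN_uncond {x ε : ℕ → ℝ} (hx : Tendsto x atTop (𝓝 0)) (hε : ∀ i, |ε i| ≤ 1) :
    NN (fun i => ε i * x i) ≤ NN x := by
  obtain ⟨C, hC0, hC⟩ := bdd_of_tendsto hx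
  have key : ∀ i, |ε i * x i| ≤ |x i| := by
    intro i
    rw [abs_mul]
    calc |ε i| * |x i| ≤ 1 * |x i| := mul_le_mul_of_nonneg_right (hε i) (abs_nonneg _)
      _ = |x i| := one_mul _
  apply max_le
  · apply Real.iSup_le _ (NN_nonneg x)
    intro i
    exact le_trans (key i) (le_trans (le_ciSup (bddAbove_abs hC) i) (sup_abs_le_NN x))
  · rw [Real.mul_iSup_of_nonneg (by norm_num : (0:ℝ) ≤ 2)]
    apply Real.iSup_le _ (NN_nonneg x)
    intro L
    refine le_trans ?_ (sumA_le_NN L hC0 hC)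
    apply mul_le_mul_of_nonneg_left _ (by norm_num)
    apply Finset.sum_le_sum
    intro i _
    exact mul_le_mul_of_nonneg_left (key i) (qf_pos i).le

/-! ### Construction for the main distortion property -/

-- cumulative block boundaries
def Cseq (T : ℕ → ℕ) : ℕ → ℕ
  | 0 => 0
  | K+1 => max (2 * Cseq T K + 1) (T (K+1))

lemma Cseq_lt_succ (T : ℕ → ℕ) (K : ℕ) : Cseq T K < Cseq T (K+1) := by
  have : Cseq T (K+1) = max (2 * Cseq T K + 1) (T (K+1)) := rfl
  omega

lemma Cseq_strictMono (T : ℕ → ℕ) : StrictMono (Cseq T) :=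
  strictMono_nat_of_lt_succ (Cseq_lt_succ T)

lemma Cseq_zero (T : ℕ → ℕ) : Cseq T 0 = 0 := rfl

lemma le_Cseq (T : ℕ → ℕ) (K : ℕ) : K ≤ Cseq T K :=
  (Cseq_strictMono T).le_apply

lemma Tle_Cseq (T : ℕ → ℕ) (K : ℕ) : T (K+1) ≤ Cseq T (K+1) := by
  have : Cseq T (K+1) = max (2 * Cseq T K + 1) (T (K+1)) := rfl
  omega

-- block sizes
def mseq (T : ℕ → ℕ) (k : ℕ) : ℕ := Cseq T (k+1) - Cseq T k

lemma mseq_pos (T : ℕ → ℕ) (k : ℕ) : 0 < mseq T k := by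
  have := Cseq_lt_succ T k; unfold mseq; omega

lemma mseq_le_succ (T : ℕ → ℕ) (k : ℕ) : mseq T k ≤ mseq T (k+1) := by
  have h1 : Cseq T (k+1+1) = max (2 * Cseq T (k+1) + 1) (T (k+1+1)) := rfl
  have h2 : Cseq T k < Cseq T (k+1) := Cseq_lt_succ T k
  unfold mseq; omega

lemma mseq_mono (T : ℕ → ℕ) {k k' : ℕ} (h : k ≤ k') : mseq T k ≤ mseq T k' :=
  monotone_nat_of_le_succ (mseq_le_succ T) h

-- block index of a flat index
def sblk (T : ℕ → ℕ) (j : ℕ) : ℕ := Nat.findGreatest (fun K => Cseq T K ≤ j) j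

lemma Cseq_sblk_le (T : ℕ → ℕ) (j : ℕ) : Cseq T (sblk T j) ≤ j :=
  Nat.findGreatest_spec (P := fun K => Cseq T K ≤ j) (Nat.zero_le j) (by simp [Cseq_zero])

lemma lt_Cseq_sblk_succ (T : ℕ → ℕ) (j : ℕ) : j < Cseq T (sblk T j + 1) := by
  by_contra h
  push_neg at h
  have hle : sblk T j + 1 ≤ j := le_trans (le_Cseq T _) h
  exact Nat.findGreatest_is_greatest (Nat.lt_succ_self _) hle h

lemma le_sblk (T : ℕ → ℕ) {K j : ℕ} (h : Cseq T K ≤ j) : K ≤ sblk T j :=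
  Nat.le_findGreatest (le_trans (le_Cseq T K) h) h

lemma sblk_mono (T : ℕ → ℕ) {j j' : ℕ} (h : j ≤ j') : sblk T j ≤ sblk T j' :=
  le_sblk T (le_trans (Cseq_sblk_le T j) h)

lemma sblk_eq (T : ℕ → ℕ) {K j : ℕ} (h1 : Cseq T K ≤ j) (h2 : j < Cseq T (K+1)) :
    sblk T j = K := by
  have hge := le_sblk T h1
  by_contra hne
  have hgt : K + 1 ≤ sblk T j := by omega
  have := le_trans ((Cseq_strictMono T).monotone hgt) (Cseq_sblk_le T j)
  omega

-- real-valued data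
def vv (k : ℕ) : ℝ := (((k:ℝ)+1) * ((k:ℝ)+2))⁻¹
def tt (k : ℕ) : ℝ := ((k:ℝ)+1)⁻¹

lemma vv_pos (k : ℕ) : 0 < vv k := by unfold vv; positivity
lemma tt_pos (k : ℕ) : 0 < tt k := by unfold tt; positivity
lemma tt_le_one (k : ℕ) : tt k ≤ 1 := by
  unfold tt
  rw [inv_le_one_iff₀]; right; push_cast; linarith [Nat.cast_nonneg (α := ℝ) k]
lemma tt_anti {k k' : ℕ} (h : k ≤ k') : tt k' ≤ tt k := by
  have hc : (k:ℝ) ≤ (k':ℝ) := Nat.cast_le.2 h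
  unfold tt
  apply inv_anti₀ (by positivity)
  linarith

lemma vv_anti {k k' : ℕ} (h : k ≤ k') : vv k' ≤ vv k := by
  have hc : (k:ℝ) ≤ (k':ℝ) := Nat.cast_le.2 h
  have h0 : (0:ℝ) ≤ (k:ℝ) := Nat.cast_nonneg k
  unfold vv
  apply inv_anti₀ (by positivity)
  nlinarith

lemma vt_anti {k k' : ℕ} (h : k ≤ k') : vv k' * tt k' ≤ vv k * tt k :=
  mul_le_mul (vv_anti h) (tt_anti h) (tt_pos k').le (vv_pos k).le

lemma sum_vv (K : ℕ) : ∑ k ∈ Finset.range K, vv k = 1 - ((K:ℝ)+1)⁻¹ := by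
  induction K with
  | zero => simp
  | succ K ih =>
    rw [Finset.sum_range_succ, ih]
    unfold vv
    push_cast
    have h1 : ((K:ℝ)+1) ≠ 0 := by positivity
    have h2 : ((K:ℝ)+2) ≠ 0 := by positivity
    field_simp
    ring

lemma sum_vv_le_one (K : ℕ) : ∑ k ∈ Finset.range K, vv k ≤ 1 := by
  rw [sum_vv]
  have : (0:ℝ) < (K:ℝ)+1 := by positivity
  have := inv_pos.2 this
  linarith

def BB (K : ℕ) : ℝ := ∑ k ∈ Finset.range K, vv k * tt k

lemma BB_mono {K K' : ℕ} (h : K ≤ K') : BB K ≤ BB K' := by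
  unfold BB
  apply Finset.sum_le_sum_of_subset_of_nonneg (Finset.range_subset_range.2 h)
  intro k _ _
  exact (mul_pos (vv_pos k) (tt_pos k)).le

lemma BB_two : BB 2 = 7/12 := by
  unfold BB vv tt
  rw [Finset.sum_range_succ, Finset.sum_range_succ]
  norm_num

-- flat weights
def wseq (T : ℕ → ℕ) (j : ℕ) : ℝ := vv (sblk T j) / (mseq T (sblk T j) : ℝ)
def dseq (T : ℕ → ℕ) (j : ℕ) : ℝ := wseq T j * tt (sblk T j)

lemma wseq_pos (T : ℕ → ℕ) (j : ℕ) : 0 < wseq T j :=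
  div_pos (vv_pos _) (by exact_mod_cast mseq_pos T _)

lemma dseq_pos (T : ℕ → ℕ) (j : ℕ) : 0 < dseq T j :=
  mul_pos (wseq_pos T j) (tt_pos _)

lemma dseq_anti (T : ℕ → ℕ) {j j' : ℕ} (h : j ≤ j') : dseq T j' ≤ dseq T j := by
  have hs := sblk_mono T h
  set k := sblk T j
  set k' := sblk T j'
  unfold dseq wseq
  rw [div_mul_eq_mul_div, div_mul_eq_mul_div]
  apply div_le_div₀ (mul_pos (vv_pos k) (tt_pos k)).le (vt_anti hs)
    (by exact_mod_cast mseq_pos T k)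
  exact_mod_cast mseq_mono T hs

-- integer denominators for weights
def rr (T : ℕ → ℕ) (j : ℕ) : ℕ := (sblk T j + 1) * (sblk T j + 2) * mseq T (sblk T j)

lemma rr_ge_two (T : ℕ → ℕ) (j : ℕ) : 2 ≤ rr T j := by
  have h1 := mseq_pos T (sblk T j)
  unfold rr
  have h2 : 1 ≤ mseq T (sblk T j) := h1
  calc 2 ≤ (sblk T j + 1) * (sblk T j + 2) * 1 := by nlinarith [Nat.zero_le (sblk T j)]
    _ ≤ (sblk T j + 1) * (sblk T j + 2) * mseq T (sblk T j) := by
        exact Nat.mul_le_mul_left _ h2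

lemma wseq_eq_inv_rr (T : ℕ → ℕ) (j : ℕ) : wseq T j = ((rr T j : ℝ))⁻¹ := by
  unfold wseq rr vv
  have h1 : (0:ℝ) < ((mseq T (sblk T j) : ℕ) : ℝ) := by exact_mod_cast mseq_pos T _
  have hs : (0:ℝ) < ((sblk T j : ℝ) + 1) * ((sblk T j : ℝ) + 2) := by positivity
  push_cast
  rw [div_eq_mul_inv, ← mul_inv]

-- positions
def pos (T : ℕ → ℕ) : ℕ → ℕ
  | 0 => Nat.pair (rr T 0 - 2) 0
  | j+1 => Nat.pair (rr T (j+1) - 2) (pos T j + 1)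

lemma pos_strictMono (T : ℕ → ℕ) : StrictMono (pos T) := by
  apply strictMono_nat_of_lt_succ
  intro j
  calc pos T j < pos T j + 1 := Nat.lt_succ_self _
    _ ≤ Nat.pair (rr T (j+1) - 2) (pos T j + 1) := Nat.right_le_pair _ _
    _ = pos T (j+1) := rfl

lemma qf_pos_eq (T : ℕ → ℕ) (j : ℕ) : qf (pos T j) = wseq T j := by
  have h2 := rr_ge_two T j
  have hq : (((rr T j - 2 : ℕ) : ℝ) + 2) = (rr T j : ℝ) := by
    have : ((rr T j - 2 : ℕ) : ℝ) = (rr T j : ℝ) - 2 := by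
      rw [Nat.cast_sub h2]; norm_num
    rw [this]; ring
  rw [wseq_eq_inv_rr]
  cases j with
  | zero => rw [show pos T 0 = Nat.pair (rr T 0 - 2) 0 from rfl, qf_pair, hq]
  | succ j => rw [show pos T (j+1) = Nat.pair (rr T (j+1) - 2) (pos T j + 1) from rfl, qf_pair, hq]

-- the vector x
open Classical in
def xx (T : ℕ → ℕ) (i : ℕ) : ℝ :=
  if h : ∃ j, pos T j = i then tt (sblk T (Nat.find h)) else 0

lemma xx_apply_pos (T : ℕ → ℕ) (j : ℕ) : xx T (pos T j) = tt (sblk T j) := by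
  have h : ∃ j', pos T j' = pos T j := ⟨j, rfl⟩
  rw [xx, dif_pos h]
  congr 1
  have := Nat.find_spec h
  exact congrArg (sblk T) ((pos_strictMono T).injective this)

lemma xx_nonneg (T : ℕ → ℕ) (i : ℕ) : 0 ≤ xx T i := by
  rw [xx]; split
  · exact (tt_pos _).le
  · exact le_refl 0

lemma xx_le_one (T : ℕ → ℕ) (i : ℕ) : xx T i ≤ 1 := by
  rw [xx]; split
  · exact tt_le_one _
  · norm_num

lemma xx_abs (T : ℕ → ℕ) (i : ℕ) : |xx T i| = xx T i := abs_of_nonneg (xx_nonneg T i)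

lemma xx_abs_le_one (T : ℕ → ℕ) (i : ℕ) : |xx T i| ≤ 1 := by
  rw [xx_abs]; exact xx_le_one T i

-- summing over blocks
lemma sum_blocks (T : ℕ → ℕ) (F : ℕ → ℝ) (K : ℕ) :
    ∑ j ∈ Finset.range (Cseq T K), F (sblk T j) = ∑ k ∈ Finset.range K, (mseq T k : ℝ) * F k := by
  induction K with
  | zero => simp [Cseq_zero]
  | succ K ih =>
    rw [Finset.sum_range_succ, ← ih]
    have hle : Cseq T K ≤ Cseq T (K+1) := (Cseq_lt_succ T K).le
    rw [Finset.range_eq_Ico, ← Finset.sum_Ico_consecutive _ (Nat.zero_le _) hle,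
      ← Finset.range_eq_Ico]
    congr 1
    have hconst : ∀ j ∈ Finset.Ico (Cseq T K) (Cseq T (K+1)), F (sblk T j) = F K := by
      intro j hj
      rw [Finset.mem_Ico] at hj
      rw [sblk_eq T hj.1 hj.2]
    rw [Finset.sum_congr rfl hconst, Finset.sum_const, Nat.card_Ico]
    rw [nsmul_eq_mul]
    rfl

lemma sum_wseq (T : ℕ → ℕ) (K : ℕ) :
    ∑ j ∈ Finset.range (Cseq T K), wseq T j = ∑ k ∈ Finset.range K, vv k := by
  calc ∑ j ∈ Finset.range (Cseq T K), wseq T j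
      = ∑ k ∈ Finset.range K, (mseq T k : ℝ) * (vv k / (mseq T k : ℝ)) := by
        rw [← sum_blocks T (fun k => vv k / (mseq T k : ℝ)) K]
        rfl
    _ = ∑ k ∈ Finset.range K, vv k := by
        apply Finset.sum_congr rfl
        intro k _
        rw [mul_div_cancel₀]
        exact_mod_cast (mseq_pos T k).ne'

lemma sum_dseq (T : ℕ → ℕ) (K : ℕ) :
    ∑ j ∈ Finset.range (Cseq T K), dseq T j = BB K := by
  calc ∑ j ∈ Finset.range (Cseq T K), dseq T j
      = ∑ k ∈ Finset.range K, (mseq T k : ℝ) * (vv k / (mseq T k : ℝ) * tt k) := by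
        rw [← sum_blocks T (fun k => vv k / (mseq T k : ℝ) * tt k) K]
        rfl
    _ = BB K := by
        apply Finset.sum_congr rfl
        intro k _
        rw [← mul_assoc, mul_div_cancel₀]
        exact_mod_cast (mseq_pos T k).ne'

-- sum of at most n terms of an antitone nonneg sequence is at most sum of first n
lemma sum_card_le {d : ℕ → ℝ} (hd : ∀ {i j : ℕ}, i ≤ j → d j ≤ d i) (h0 : ∀ i, 0 ≤ d i) :
    ∀ (n : ℕ) (I : Finset ℕ), I.card ≤ n → ∑ k ∈ I, d k ≤ ∑ k ∈ Finset.range n, d k := by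
  intro n
  induction n with
  | zero =>
    intro I hI
    have : I = ∅ := Finset.card_eq_zero.1 (Nat.le_zero.1 hI)
    simp [this]
  | succ n ih =>
    intro I hI
    rcases I.eq_empty_or_nonempty with rfl | hne
    · apply Finset.sum_nonneg
      intro k _; exact h0 k
    · set M := I.max' hne with hM
      rcases le_or_gt M n with hMn | hMn
      · apply Finset.sum_le_sum_of_subset_of_nonneg
        · intro i hi
          rw [Finset.mem_range]
          have := Finset.le_max' I i hi
          omega
        · intro k _ _; exact h0 k
      · have hMI : M ∈ I := I.max'_mem hne
        rw [← Finset.sum_erase_add I d hMI, Finset.sum_range_succ]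
        have h1 : ∑ k ∈ I.erase M, d k ≤ ∑ k ∈ Finset.range n, d k := by
          apply ih
          have := Finset.card_erase_of_mem hMI
          omega
        have h2 : d M ≤ d n := hd (by omega)
        linarith

-- the key projection bound
lemma proj_bound (T : ℕ → ℕ) (A : Finset ℕ) {n : ℕ} (hcard : A.card ≤ n) (L : Adm) :
    ∑ i ∈ L.1, qf i * |(fun i => if i ∈ A then xx T i else 0) i|
      ≤ ∑ j ∈ Finset.range n, dseq T j := by
  classical
  have habs : ∀ i : ℕ, qf i * |if i ∈ A then xx T i else 0|
      = if i ∈ A then qf i * xx T i else 0 := by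
    intro i
    split
    · rw [xx_abs]
    · simp
  have step1 : ∑ i ∈ L.1, qf i * |(fun i => if i ∈ A then xx T i else 0) i|
      ≤ ∑ i ∈ A, qf i * xx T i := by
    simp only [habs]
    rw [Finset.sum_ite_mem]
    apply Finset.sum_le_sum_of_subset_of_nonneg (Finset.inter_subset_right)
    intro k _ _
    exact mul_nonneg (qf_pos k).le (xx_nonneg T k)
  refine le_trans step1 ?_
  -- restrict to the support
  set P : ℕ → Prop := fun i => ∃ j, pos T j = i with hP
  have step2 : ∑ i ∈ A, qf i * xx T i = ∑ i ∈ A.filter P, qf i * xx T i := by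
    rw [Finset.sum_filter_of_ne]
    intro i _ hne
    by_contra hp
    have : xx T i = 0 := by rw [xx, dif_neg hp]
    rw [this, mul_zero] at hne
    exact hne rfl
  rw [step2]
  -- the filtered set is the image under pos of an index set
  set J : Finset ℕ := (Finset.range ((A.sup id)+1)).filter (fun j => pos T j ∈ A) with hJ
  have himg : A.filter P = J.image (pos T) := by
    apply Finset.ext
    intro i
    constructor
    · intro hi
      rw [Finset.mem_filter] at hi
      obtain ⟨hiA, j, hj⟩ := hi
      rw [Finset.mem_image]
      refine ⟨j, ?_, hj⟩
      rw [hJ, Finset.mem_filter, Finset.mem_range]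
      constructor
      · have h1 : j ≤ pos T j := (pos_strictMono T).le_apply
        have h2 : pos T j ≤ A.sup id := by
          rw [hj]
          exact Finset.le_sup (f := id) hiA
        omega
      · rw [hj]; exact hiA
    · intro hi
      rw [Finset.mem_image] at hi
      obtain ⟨j, hjJ, hj⟩ := hi
      rw [hJ, Finset.mem_filter] at hjJ
      rw [Finset.mem_filter]
      exact ⟨by rw [← hj]; exact hjJ.2, ⟨j, hj⟩⟩
  rw [himg, Finset.sum_image (fun x _ y _ h => (pos_strictMono T).injective h)]
  have hterm : ∀ j, qf (pos T j) * xx T (pos T j) = dseq T j := by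
    intro j
    rw [qf_pos_eq, xx_apply_pos]
    rfl
  rw [Finset.sum_congr rfl (fun j _ => hterm j)]
  -- card J ≤ n
  have hcardJ : J.card ≤ n := by
    have h1 : (J.image (pos T)).card = J.card :=
      Finset.card_image_of_injective J (pos_strictMono T).injective
    have h2 : J.image (pos T) ⊆ A := by
      rw [← himg]; exact Finset.filter_subset _ _
    have := Finset.card_le_card h2
    omega
  exact sum_card_le (fun h => dseq_anti T h) (fun i => (dseq_pos T i).le) n J hcardJ

-- lower bound for NN (xx T)
lemma NN_xx_ge (T : ℕ → ℕ) (K : ℕ) : 2 * BB K ≤ NN (xx T) := by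
  set L0 : Finset ℕ := (Finset.range (Cseq T K)).image (pos T) with hL0
  have hinj : ∀ x ∈ Finset.range (Cseq T K), ∀ y ∈ Finset.range (Cseq T K),
      pos T x = pos T y → x = y := fun x _ y _ h => (pos_strictMono T).injective h
  have hadm : ∑ i ∈ L0, qf i ≤ 1 := by
    rw [hL0, Finset.sum_image hinj]
    rw [Finset.sum_congr rfl (fun j _ => qf_pos_eq T j), sum_wseq]
    exact sum_vv_le_one K
  have hsum : ∑ i ∈ L0, qf i * |xx T i| = BB K := by
    rw [hL0, Finset.sum_image hinj]
    rw [← sum_dseq T K]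
    apply Finset.sum_congr rfl
    intro j _
    rw [qf_pos_eq, xx_abs, xx_apply_pos]
    rfl
  have := sumA_le_NN (x := xx T) ⟨L0, hadm⟩ (by norm_num : (0:ℝ) ≤ 1) (xx_abs_le_one T)
  rw [hsum] at this
  exact this

-- x tends to zero
lemma xx_tendsto (T : ℕ → ℕ) : Tendsto (xx T) atTop (𝓝 0) := by
  rw [Metric.tendsto_atTop]
  intro ε hε
  obtain ⟨K, hK⟩ := exists_nat_one_div_lt hε
  refine ⟨pos T (Cseq T K) + 1, fun i hi => ?_⟩
  rw [Real.dist_eq, sub_zero, xx_abs]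
  by_cases h : ∃ j, pos T j = i
  · obtain ⟨j, hj⟩ := h
    rw [← hj, xx_apply_pos]
    have hji : pos T (Cseq T K) < pos T j := by omega
    have hjK : Cseq T K < j := (pos_strictMono T).lt_iff_lt.1 hji
    have hsb : K ≤ sblk T j := le_sblk T hjK.le
    calc tt (sblk T j) ≤ tt K := tt_anti hsb
      _ < ε := by
        have : tt K = 1 / ((K:ℝ)+1) := by rw [tt, one_div]
        rw [this]; exact_mod_cast hK
  · rw [xx, dif_neg h]
    exact hε

def dd (K : ℕ) : ℝ := 2 * (vv (K+1) * tt (K+1))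

lemma dd_pos (K : ℕ) : 0 < dd K :=
  mul_pos (by norm_num) (mul_pos (vv_pos _) (tt_pos _))

lemma dd_le_sixth (K : ℕ) : dd K ≤ 1/6 := by
  have h := vt_anti (show 1 ≤ K+1 by omega)
  have h1 : vv 1 * tt 1 = 1/12 := by norm_num [vv, tt]
  unfold dd
  rw [h1] at h
  linarith

lemma BB_step (K : ℕ) : BB (K+1) + vv (K+1) * tt (K+1) ≤ BB (K+3) := by
  unfold BB
  rw [Finset.sum_range_succ (n := K+2), Finset.sum_range_succ (n := K+1)]
  have := (mul_pos (vv_pos (K+2)) (tt_pos (K+2))).le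
  linarith

lemma NN_main (a : ℕ → ℝ) (hapos : ∀ n, 0 < a n) (ha : Tendsto a atTop (𝓝 0)) :
    ∃ x : ℕ → ℝ, Tendsto x atTop (𝓝 0) ∧
      Tendsto (fun n => (a n)⁻¹ * (NN x - ⨆ A : {A : Finset ℕ // A.card ≤ n},
        NN (fun i => if i ∈ A.1 then x i else 0))) atTop atTop := by
  have hTex : ∀ K : ℕ, ∃ T : ℕ, ∀ m ≥ T, a m < dd K / (K+1) := by
    intro K
    have hpos : (0:ℝ) < dd K / (K+1) := by
      apply div_pos (dd_pos K)
      have : (0:ℝ) ≤ (K:ℝ) := Nat.cast_nonneg K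
      linarith
    exact eventually_atTop.mp (ha.eventually (gt_mem_nhds hpos))
  choose T hT using hTex
  refine ⟨xx T, xx_tendsto T, ?_⟩
  rw [tendsto_atTop]
  intro b
  obtain ⟨M, hM⟩ := exists_nat_ge b
  rw [eventually_atTop]
  refine ⟨Cseq T (M+1), fun n hn => ?_⟩
  set K := sblk T n with hK
  have hKM : M + 1 ≤ K := le_sblk T hn
  -- the supremum bound
  have hsup : (⨆ A : {A : Finset ℕ // A.card ≤ n},
      NN (fun i => if i ∈ A.1 then xx T i else 0)) ≤ max 1 (2 * BB (K+1)) := by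
    apply Real.iSup_le _ (le_trans (by norm_num) (le_max_left 1 (2 * BB (K+1))))
    intro A
    apply max_le
    · refine le_trans (Real.iSup_le (fun i => ?_) (by norm_num)) (le_max_left _ _)
      show |if i ∈ A.1 then xx T i else 0| ≤ 1
      split
      · exact xx_abs_le_one T _
      · norm_num
    · refine le_trans ?_ (le_max_right _ _)
      have hsum : ∀ L : Adm, ∑ i ∈ L.1, qf i * |(fun i => if i ∈ A.1 then xx T i else 0) i|
          ≤ BB (K+1) := by
        intro L
        refine le_trans (proj_bound T A.1 A.2 L) ?_
        calc ∑ j ∈ Finset.range n, dseq T j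
            ≤ ∑ j ∈ Finset.range (Cseq T (K+1)), dseq T j := by
              apply Finset.sum_le_sum_of_subset_of_nonneg
              · exact Finset.range_subset_range.2 (lt_Cseq_sblk_succ T n).le
              · intro j _ _; exact (dseq_pos T j).le
          _ = BB (K+1) := sum_dseq T (K+1)
      have hBB : (0:ℝ) ≤ BB (K+1) := by
        apply Finset.sum_nonneg
        intro k _; exact (mul_pos (vv_pos k) (tt_pos k)).le
      have := Real.iSup_le hsum hBB
      linarith
  -- the norm lower bound
  have hNN : 2 * BB (K+3) ≤ NN (xx T) := NN_xx_ge T (K+3)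
  -- arithmetic: the gap is at least dd K
  have harith : max 1 (2 * BB (K+1)) + dd K ≤ 2 * BB (K+3) := by
    have h1 : BB 2 ≤ BB (K+3) := BB_mono (by omega)
    rw [BB_two] at h1
    have h2 := dd_le_sixth K
    have h3 := BB_step K
    rcases max_cases 1 (2 * BB (K+1)) with ⟨heq, _⟩ | ⟨heq, _⟩ <;> rw [heq] <;>
      unfold dd at h2 ⊢ <;> linarith
  have hgap : dd K ≤ NN (xx T) - ⨆ A : {A : Finset ℕ // A.card ≤ n},
      NN (fun i => if i ∈ A.1 then xx T i else 0) := by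
    linarith
  -- a n is small
  have hCKn : Cseq T K ≤ n := by rw [hK]; exact Cseq_sblk_le T n
  have hTn : T K ≤ n := by
    obtain ⟨K', hK'⟩ : ∃ K', K = K' + 1 := ⟨K - 1, by omega⟩
    have h4 : T K ≤ Cseq T K := by rw [hK']; exact Tle_Cseq T K'
    exact le_trans h4 hCKn
  have han : a n < dd K / ((K:ℝ)+1) := by
    have := hT K n hTn
    exact_mod_cast this
  have hapn := hapos n
  -- conclude
  have hKb : ((K:ℝ)+1) ≤ (a n)⁻¹ * dd K := by
    have hden : (0:ℝ) < (K:ℝ)+1 := by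
      have : (0:ℝ) ≤ (K:ℝ) := Nat.cast_nonneg K
      linarith
    have han2 : a n * ((K:ℝ)+1) ≤ dd K := ((lt_div_iff₀ hden).mp han).le
    calc ((K:ℝ)+1) = (a n)⁻¹ * (a n * ((K:ℝ)+1)) := by field_simp
      _ ≤ (a n)⁻¹ * dd K := mul_le_mul_of_nonneg_left han2 (inv_nonneg.2 hapn.le)
  calc b ≤ (M:ℝ) := hM
    _ ≤ ((K:ℝ)+1) := by
        have : (M:ℝ) ≤ (K:ℝ) := by exact_mod_cast (by omega : M ≤ K)
        linarith
    _ ≤ (a n)⁻¹ * dd K := hKb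
    _ ≤ (a n)⁻¹ * (NN (xx T) - ⨆ A : {A : Finset ℕ // A.card ≤ n},
          NN (fun i => if i ∈ A.1 then xx T i else 0)) := by
        apply mul_le_mul_of_nonneg_left hgap (inv_nonneg.2 hapn.le)

end

open Filter Topology

theorem stmt19 :
    ∃ N : (ℕ → ℝ) → ℝ,
      (∀ x y : ℕ → ℝ, Tendsto x atTop (𝓝 0) → Tendsto y atTop (𝓝 0) →
        N (x + y) ≤ N x + N y) ∧
      (∀ (c : ℝ) (x : ℕ → ℝ), Tendsto x atTop (𝓝 0) → N (c • x) = |c| * N x) ∧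
      (∀ x : ℕ → ℝ, Tendsto x atTop (𝓝 0) →
        (⨆ i, |x i|) ≤ N x ∧ N x ≤ 2 * ⨆ i, |x i|) ∧
      (∀ n : ℕ, N (Pi.single n 1) = 1) ∧
      (∀ (x ε : ℕ → ℝ), Tendsto x atTop (𝓝 0) → (∀ i, |ε i| ≤ 1) →
        N (fun i => ε i * x i) ≤ N x) ∧
      ∀ a : ℕ → ℝ, (∀ n, 0 < a n) → Tendsto a atTop (𝓝 0) →
        ∃ x : ℕ → ℝ, Tendsto x atTop (𝓝 0) ∧
          Tendsto (fun n => (a n)⁻¹ * (N x - ⨆ A : {A : Finset ℕ // A.card ≤ n},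
            N (fun i => if i ∈ A.1 then x i else 0))) atTop atTop := by
  exact ⟨NN, fun x y hx hy => NN_add hx hy, fun c x _ => NN_smul c x,
    fun x hx => NN_bounds hx, NN_single, fun x ε hx hε => NN_uncond hx hε,
    NN_main⟩
end
end
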